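/- arXiv:2502.20718 — 11 statements merged into one kernel-verified Lean document; each statement's English description precedes it below -/
import Mathlib

section
/- Suppose there exists Γ ⊆ {1,…,p} with |Γ| = p − s such that the pair (A, C_Γ) is NOT observable. Then, for the data Y_i = 0 ∈ ℝ^{t+1} for every i ∈ {1,…,p} (which is generated under at most s attacks from x_true = 0), the set of plausible states is infinite. (Lemma 2, claim 1: under failure of s-sparse observability the set of plausible states can be infinite.) -/
/-!
A nonzero `x₀` that the sensors in `Γ` cannot see during the first `n` steps stays invisible
forever: by Cayley–Hamilton every power `A ^ τ` is a linear combination of `A ^ k` with `k < n`.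
Hence every multiple `c • x₀` produces zero output on all of `Γ` over any horizon, and these
multiples form an infinite set of plausible states for the zero data.
-/

open Matrix Polynomial

section

variable {R ι : Type*} [CommRing R] [Fintype ι] [DecidableEq ι]

theorem Matrix.pow_mem_span_pow_lt_card [Nontrivial R] (A : Matrix ι ι R) (τ : ℕ) :
    A ^ τ ∈ Submodule.span R ((A ^ ·) '' Set.Iio (Fintype.card ι)) := by
  rcases isEmpty_or_nonempty ι with _ | _
  · rw [Subsingleton.elim (A ^ τ) 0]
    exact Submodule.zero_mem _
  have hdeg : (X ^ τ %ₘ A.charpoly).natDegree < Fintype.card ι := by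
    rw [← A.charpoly_natDegree_eq_dim]
    refine natDegree_modByMonic_lt _ A.charpoly_monic fun h => ?_
    have := A.charpoly_natDegree_eq_dim
    rw [h, natDegree_one] at this
    exact Fintype.card_ne_zero this.symm
  rw [pow_eq_aeval_mod_charpoly, aeval_eq_sum_range' hdeg]
  exact Submodule.sum_mem _ fun k hk => Submodule.smul_mem _ _ <|
    Submodule.subset_span ⟨k, Finset.mem_range.mp hk, rfl⟩

theorem LinearMap.map_matrix_pow_eq_zero_of_forall_lt_card [Nontrivial R] {M : Type*}
    [AddCommGroup M] [Module R M] (L : Matrix ι ι R →ₗ[R] M) (A : Matrix ι ι R)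
    (h : ∀ k < Fintype.card ι, L (A ^ k) = 0) (τ : ℕ) : L (A ^ τ) = 0 := by
  have hspan : Submodule.span R ((A ^ ·) '' Set.Iio (Fintype.card ι)) ≤ LinearMap.ker L :=
    Submodule.span_le.mpr <| by
      rintro _ ⟨k, hk, rfl⟩
      exact h k hk
  exact hspan (pow_mem_span_pow_lt_card A τ)

theorem Matrix.mul_pow_mulVec_eq_zero_of_forall_lt_card [Nontrivial R] {κ : Type*}
    (C : Matrix κ ι R) (A : Matrix ι ι R) (x : ι → R) (i : κ)
    (h : ∀ k < Fintype.card ι, ((C * A ^ k) *ᵥ x) i = 0) (τ : ℕ) : ((C * A ^ τ) *ᵥ x) i = 0 :=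
  let output : Matrix ι ι R →ₗ[R] R :=
    { toFun := fun M => ((C * M) *ᵥ x) i
      map_add' := fun M N => by simp only [Matrix.mul_add, Matrix.add_mulVec, Pi.add_apply]
      map_smul' := fun c M => by
        simp only [Matrix.mul_smul, Matrix.smul_mulVec, Pi.smul_apply, smul_eq_mul,
          RingHom.id_apply] }
  output.map_matrix_pow_eq_zero_of_forall_lt_card A h τ

end

theorem plausible_set_infinite_of_not_sparse_observable_general
    {n p s t : ℕ}
    (A : Matrix (Fin n) (Fin n) ℝ) (C : Matrix (Fin p) (Fin n) ℝ)
    (Γ : Finset (Fin p)) (hΓcard : Γ.card = p - s)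
    (hnotobs : ¬ (∀ x : Fin n → ℝ,
        (∀ i ∈ Γ, ∀ τ < n, ((C * A ^ τ).mulVec x) i = 0) → x = 0)) :
    {x : Fin n → ℝ | ∃ Γ' : Finset (Fin p), Γ'.card = p - s ∧
        ∀ i ∈ Γ', ∀ τ ≤ t, ((C * A ^ τ).mulVec x) i = 0}.Infinite := by
  push Not at hnotobs
  obtain ⟨x₀, hx₀, hx₀_ne⟩ := hnotobs
  have hx₀_unobservable : ∀ i ∈ Γ, ∀ τ, ((C * A ^ τ) *ᵥ x₀) i = 0 := fun i hi =>
    C.mul_pow_mulVec_eq_zero_of_forall_lt_card A x₀ i fun k hk =>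
      hx₀ i hi k (by simpa using hk)
  refine Set.infinite_of_injective_forall_mem (smul_left_injective ℝ hx₀_ne) fun c => ?_
  refine ⟨Γ, hΓcard, fun i hi τ _ => ?_⟩
  rw [Matrix.mulVec_smul, Pi.smul_apply, hx₀_unobservable i hi τ, smul_zero]

/-- Lemma 2, claim 1: if for some `Γ` with `|Γ| = p - s` the pair
`(A, C_Γ)` is not observable, then for the zero data `Y_i = 0` the set of plausible
states is infinite. -/
theorem plausible_set_infinite_of_not_sparse_observable
    {n p s t : ℕ} (hsp : s ≤ p) (ht : n - 1 ≤ t)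
    (A : Matrix (Fin n) (Fin n) ℝ) (C : Matrix (Fin p) (Fin n) ℝ)
    (Γ : Finset (Fin p)) (hΓcard : Γ.card = p - s)
    (hnotobs : ¬ (∀ x : Fin n → ℝ,
        (∀ i ∈ Γ, ∀ τ < n, ((C * A ^ τ).mulVec x) i = 0) → x = 0)) :
    {x : Fin n → ℝ | ∃ Γ' : Finset (Fin p), Γ'.card = p - s ∧
        ∀ i ∈ Γ', ∀ τ ≤ t, ((C * A ^ τ).mulVec x) i = 0}.Infinite :=
  plausible_set_infinite_of_not_sparse_observable_general A C Γ hΓcard hnotobs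
end

section
/- If the system is s-sparse observable, then for any data vectors Y_1,…,Y_p ∈ ℝ^{t+1}, the set of plausible states is finite; moreover its cardinality is at most the binomial coefficient C(p, s). (Lemma 2, claim 2.) -/
/-!
A plausible state is pinned down by the outputs of some set `Γ` of `p - s` sensors, and
`s`-sparse observability makes the outputs of any such `Γ` injective in the state (two
consistent states differ by an unobservable one, which is zero). So the plausible set is a
union, over the `C(p, p - s) = C(p, s)` choices of `Γ`, of sets with at most one element.
-/

open Matrix

theorem Finset.set_ncard_biUnion_le_card_of_subsingleton {ι α : Type*} (t : Finset ι)
    {s : ι → Set α} (hs : ∀ i ∈ t, (s i).Subsingleton) :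
    (⋃ i ∈ t, s i).ncard ≤ t.card :=
  calc (⋃ i ∈ t, s i).ncard ≤ ∑ i ∈ t, (s i).ncard := t.set_ncard_biUnion_le s
    _ ≤ ∑ _i ∈ t, 1 :=
        Finset.sum_le_sum fun i hi => (Set.ncard_le_one (hs i hi).finite).mpr (hs i hi)
    _ = t.card := by rw [Finset.sum_const, smul_eq_mul, mul_one]

section Observability

variable {R ι : Type*} [Ring R] {n t : ℕ}

def IsObservableOn (A : Matrix (Fin n) (Fin n) R) (C : Matrix ι (Fin n) R) (Γ : Finset ι) :
    Prop :=
  ∀ x : Fin n → R, (∀ i ∈ Γ, ∀ τ < n, ((C * A ^ τ) *ᵥ x) i = 0) → x = 0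

def consistentStates (A : Matrix (Fin n) (Fin n) R) (C : Matrix ι (Fin n) R)
    (Y : ι → Fin (t + 1) → R) (Γ : Finset ι) : Set (Fin n → R) :=
  {x | ∀ i ∈ Γ, ∀ τ : Fin (t + 1), ((C * A ^ (τ : ℕ)) *ᵥ x) i = Y i τ}

theorem IsObservableOn.consistentStates_subsingleton {A : Matrix (Fin n) (Fin n) R}
    {C : Matrix ι (Fin n) R} {Γ : Finset ι} (hΓ : IsObservableOn A C Γ) (ht : n - 1 ≤ t)
    (Y : ι → Fin (t + 1) → R) : (consistentStates A C Y Γ).Subsingleton := by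
  intro x hx y hy
  refine sub_eq_zero.mp (hΓ (x - y) fun i hi τ hτ => ?_)
  have hτt : τ < t + 1 := by omega
  rw [mulVec_sub, Pi.sub_apply, sub_eq_zero]
  exact (hx i hi ⟨τ, hτt⟩).trans (hy i hi ⟨τ, hτt⟩).symm

end Observability

/-- Lemma 2, claim 2: if the system is `s`-sparse observable, then for
any data vectors the set of plausible states is finite, with cardinality at most
`C(p, s)`. -/
theorem plausible_set_finite_of_sparse_observable
    {n p s t : ℕ} (hsp : s ≤ p) (ht : n - 1 ≤ t)
    (A : Matrix (Fin n) (Fin n) ℝ) (C : Matrix (Fin p) (Fin n) ℝ)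
    (hobs : ∀ Γ : Finset (Fin p), Γ.card = p - s →
        ∀ x : Fin n → ℝ, (∀ i ∈ Γ, ∀ τ < n, ((C * A ^ τ).mulVec x) i = 0) → x = 0)
    (Y : Fin p → Fin (t + 1) → ℝ) :
    {x : Fin n → ℝ | ∃ Γ : Finset (Fin p), Γ.card = p - s ∧
        ∀ i ∈ Γ, ∀ τ : Fin (t + 1), ((C * A ^ (τ : ℕ)).mulVec x) i = Y i τ}.Finite ∧
    {x : Fin n → ℝ | ∃ Γ : Finset (Fin p), Γ.card = p - s ∧
        ∀ i ∈ Γ, ∀ τ : Fin (t + 1), ((C * A ^ (τ : ℕ)).mulVec x) i = Y i τ}.ncard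
      ≤ p.choose s := by
  set sensorSets : Finset (Finset (Fin p)) := Finset.univ.powersetCard (p - s)
  have hplausible : {x : Fin n → ℝ | ∃ Γ : Finset (Fin p), Γ.card = p - s ∧
      ∀ i ∈ Γ, ∀ τ : Fin (t + 1), ((C * A ^ (τ : ℕ)).mulVec x) i = Y i τ} =
      ⋃ Γ ∈ sensorSets, consistentStates A C Y Γ := by
    ext x
    simp [sensorSets, consistentStates]
  have hsub : ∀ Γ ∈ sensorSets, (consistentStates A C Y Γ).Subsingleton := fun Γ hΓ =>
    IsObservableOn.consistentStates_subsingleton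
      (hobs Γ (Finset.mem_powersetCard.mp hΓ).2) ht Y
  rw [hplausible]
  refine ⟨sensorSets.finite_toSet.biUnion fun Γ hΓ => (hsub Γ hΓ).finite, ?_⟩
  calc (⋃ Γ ∈ sensorSets, consistentStates A C Y Γ).ncard ≤ sensorSets.card :=
        sensorSets.set_ncard_biUnion_le_card_of_subsingleton hsub
    _ = p.choose s := by
        rw [Finset.card_powersetCard, Finset.card_univ, Fintype.card_fin, Nat.choose_symm hsp]
end

section
/- Assume 2s ≤ p and that the system is 2s-sparse observable. Then for any data vectors Y_1,…,Y_p ∈ ℝ^{t+1}, any two plausible states are equal. In particular, if the data are generated under at most s attacks from x_true, then the set of plausible states is exactly {x_true}. (Lemma 2, claim 3.) -/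
/-!
Two plausible states `x₁`, `x₂` explain the data on honest sets of `p - s` sensors each, so
they produce the same outputs on the at least `p - 2s` sensors the two sets share. Over the
horizon `0, …, n - 1 ≤ t` this makes `x₁ - x₂` unobservable from those sensors, hence zero
by `2s`-sparse observability. The true state is plausible, since at least `p - s` sensors
are not attacked.
-/

open Matrix Finset

theorem Finset.card_sub_add_le_card_inter {ι : Type*} [Fintype ι] [DecidableEq ι]
    {Γ₁ Γ₂ : Finset ι} {a b : ℕ} (h₁ : Fintype.card ι - a ≤ #Γ₁)
    (h₂ : Fintype.card ι - b ≤ #Γ₂) : Fintype.card ι - (a + b) ≤ #(Γ₁ ∩ Γ₂) := by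
  have := card_union_add_card_inter Γ₁ Γ₂
  have := card_le_univ (Γ₁ ∪ Γ₂)
  omega

namespace SensorAttack

variable {R ι : Type*} {n t : ℕ}

section Definitions

variable [Ring R] (A : Matrix (Fin n) (Fin n) R) (C : Matrix ι (Fin n) R)

/-- `(A, C_Γ)` is observable. -/
def ObservableOn (Γ : Finset ι) : Prop :=
  ∀ x : Fin n → R, (∀ i ∈ Γ, ∀ τ < n, ((C * A ^ τ) *ᵥ x) i = 0) → x = 0

def IsSparseObservable [Fintype ι] (k : ℕ) : Prop :=
  ∀ Γ : Finset ι, #Γ = Fintype.card ι - k → ObservableOn A C Γ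

def MatchesOn (Y : ι → Fin (t + 1) → R) (Γ : Finset ι) (x : Fin n → R) : Prop :=
  ∀ i ∈ Γ, ∀ τ : Fin (t + 1), ((C * A ^ (τ : ℕ)) *ᵥ x) i = Y i τ

def IsPlausible [Fintype ι] (s : ℕ) (Y : ι → Fin (t + 1) → R) (x : Fin n → R) : Prop :=
  ∃ Γ : Finset ι, #Γ = Fintype.card ι - s ∧ MatchesOn A C Y Γ x

end Definitions

variable [Ring R] {A : Matrix (Fin n) (Fin n) R} {C : Matrix ι (Fin n) R}
  {Y : ι → Fin (t + 1) → R} {Γ Γ' : Finset ι} {x x₁ x₂ : Fin n → R}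

theorem ObservableOn.mono (h : ObservableOn A C Γ) (hΓ : Γ ⊆ Γ') : ObservableOn A C Γ' :=
  fun x hx ↦ h x fun i hi ↦ hx i (hΓ hi)

theorem ObservableOn.eq_of_outputs_eq (h : ObservableOn A C Γ)
    (hx : ∀ i ∈ Γ, ∀ τ < n, ((C * A ^ τ) *ᵥ x₁) i = ((C * A ^ τ) *ᵥ x₂) i) : x₁ = x₂ :=
  sub_eq_zero.1 <| h _ fun i hi τ hτ ↦ by
    rw [mulVec_sub, Pi.sub_apply, hx i hi τ hτ, sub_self]

theorem MatchesOn.mono (h : MatchesOn A C Y Γ x) (hΓ : Γ' ⊆ Γ) : MatchesOn A C Y Γ' x :=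
  fun i hi ↦ h i (hΓ hi)

theorem ObservableOn.eq_of_matchesOn (h : ObservableOn A C Γ) (ht : n - 1 ≤ t)
    (h₁ : MatchesOn A C Y Γ x₁) (h₂ : MatchesOn A C Y Γ x₂) : x₁ = x₂ :=
  h.eq_of_outputs_eq fun i hi τ hτ ↦ by
    have hτt : τ < t + 1 := by omega
    rw [h₁ i hi ⟨τ, hτt⟩, h₂ i hi ⟨τ, hτt⟩]

variable [Fintype ι]

theorem IsSparseObservable.observableOn {k : ℕ} (h : IsSparseObservable A C k)
    (hΓ : Fintype.card ι - k ≤ #Γ) : ObservableOn A C Γ :=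
  let ⟨_, hsub, hcard⟩ := exists_subset_card_eq hΓ
  (h _ hcard).mono hsub

theorem IsPlausible.eq [DecidableEq ι] {s : ℕ} (hobs : IsSparseObservable A C (2 * s))
    (ht : n - 1 ≤ t) (h₁ : IsPlausible A C s Y x₁) (h₂ : IsPlausible A C s Y x₂) :
    x₁ = x₂ := by
  obtain ⟨Γ₁, hcard₁, hmatch₁⟩ := h₁
  obtain ⟨Γ₂, hcard₂, hmatch₂⟩ := h₂
  have hinter : Fintype.card ι - 2 * s ≤ #(Γ₁ ∩ Γ₂) := by
    rw [two_mul]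
    exact card_sub_add_le_card_inter hcard₁.ge hcard₂.ge
  exact (hobs.observableOn hinter).eq_of_matchesOn ht
    (hmatch₁.mono inter_subset_left) (hmatch₂.mono inter_subset_right)

theorem isPlausible_of_attacked_sensors [DecidableEq ι] {s : ℕ} {Λ : Finset ι}
    (hΛ : #Λ ≤ s) (hY : ∀ i ∉ Λ, ∀ τ : Fin (t + 1), Y i τ = ((C * A ^ (τ : ℕ)) *ᵥ x) i) :
    IsPlausible A C s Y x := by
  have hcompl : Fintype.card ι - s ≤ #Λᶜ := by
    rw [card_compl]
    omega
  obtain ⟨Γ, hsub, hcard⟩ := exists_subset_card_eq hcompl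
  exact ⟨Γ, hcard, fun i hi τ ↦ (hY i (mem_compl.1 (hsub hi)) τ).symm⟩

theorem setOf_isPlausible_eq_singleton [DecidableEq ι] {s : ℕ}
    (hobs : IsSparseObservable A C (2 * s)) (ht : n - 1 ≤ t) (hx : IsPlausible A C s Y x) :
    {x' | IsPlausible A C s Y x'} = {x} :=
  Set.eq_singleton_iff_unique_mem.2 ⟨hx, fun _ hx' ↦ hx'.eq hobs ht hx⟩

end SensorAttack

open SensorAttack in
theorem plausible_state_unique_of_2s_sparse_observable_general
    {n p s t : ℕ} (ht : n - 1 ≤ t)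
    (A : Matrix (Fin n) (Fin n) ℝ) (C : Matrix (Fin p) (Fin n) ℝ)
    (hobs : ∀ Γ : Finset (Fin p), Γ.card = p - 2 * s →
        ∀ x : Fin n → ℝ, (∀ i ∈ Γ, ∀ τ < n, ((C * A ^ τ).mulVec x) i = 0) → x = 0)
    (Y : Fin p → Fin (t + 1) → ℝ) :
    (∀ x₁ x₂ : Fin n → ℝ,
      (∃ Γ : Finset (Fin p), Γ.card = p - s ∧
        ∀ i ∈ Γ, ∀ τ : Fin (t + 1), ((C * A ^ (τ : ℕ)).mulVec x₁) i = Y i τ) →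
      (∃ Γ : Finset (Fin p), Γ.card = p - s ∧
        ∀ i ∈ Γ, ∀ τ : Fin (t + 1), ((C * A ^ (τ : ℕ)).mulVec x₂) i = Y i τ) →
      x₁ = x₂) ∧
    (∀ xtrue : Fin n → ℝ,
      (∃ Λ : Finset (Fin p), Λ.card ≤ s ∧
        ∀ i ∉ Λ, ∀ τ : Fin (t + 1), Y i τ = ((C * A ^ (τ : ℕ)).mulVec xtrue) i) →
      {x : Fin n → ℝ | ∃ Γ : Finset (Fin p), Γ.card = p - s ∧
        ∀ i ∈ Γ, ∀ τ : Fin (t + 1), ((C * A ^ (τ : ℕ)).mulVec x) i = Y i τ}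
        = {xtrue}) := by
  have hsparse : IsSparseObservable A C (2 * s) := by
    simpa only [IsSparseObservable, ObservableOn, Fintype.card_fin] using hobs
  have unique : ∀ x₁ x₂, IsPlausible A C s Y x₁ → IsPlausible A C s Y x₂ → x₁ = x₂ :=
    fun _ _ h₁ h₂ ↦ h₁.eq hsparse ht h₂
  have exact_set : ∀ xtrue, (∃ Λ : Finset (Fin p), #Λ ≤ s ∧
      ∀ i ∉ Λ, ∀ τ : Fin (t + 1), Y i τ = ((C * A ^ (τ : ℕ)) *ᵥ xtrue) i) →
      {x | IsPlausible A C s Y x} = {xtrue} :=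
    fun _ ⟨_, hΛ, hY⟩ ↦
      setOf_isPlausible_eq_singleton hsparse ht (isPlausible_of_attacked_sensors hΛ hY)
  simpa only [IsPlausible, MatchesOn, Fintype.card_fin] using And.intro unique exact_set

/-- Lemma 2, claim 3: if `2s ≤ p` and the system is `2s`-sparse
observable, then any two plausible states are equal; moreover, if the data are
generated under at most `s` attacks from `x_true`, then the set of plausible states is
exactly `{x_true}`. -/
theorem plausible_state_unique_of_2s_sparse_observable
    {n p s t : ℕ} (hsp : 2 * s ≤ p) (ht : n - 1 ≤ t)
    (A : Matrix (Fin n) (Fin n) ℝ) (C : Matrix (Fin p) (Fin n) ℝ)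
    (hobs : ∀ Γ : Finset (Fin p), Γ.card = p - 2 * s →
        ∀ x : Fin n → ℝ, (∀ i ∈ Γ, ∀ τ < n, ((C * A ^ τ).mulVec x) i = 0) → x = 0)
    (Y : Fin p → Fin (t + 1) → ℝ) :
    (∀ x₁ x₂ : Fin n → ℝ,
      (∃ Γ : Finset (Fin p), Γ.card = p - s ∧
        ∀ i ∈ Γ, ∀ τ : Fin (t + 1), ((C * A ^ (τ : ℕ)).mulVec x₁) i = Y i τ) →
      (∃ Γ : Finset (Fin p), Γ.card = p - s ∧
        ∀ i ∈ Γ, ∀ τ : Fin (t + 1), ((C * A ^ (τ : ℕ)).mulVec x₂) i = Y i τ) →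
      x₁ = x₂) ∧
    (∀ xtrue : Fin n → ℝ,
      (∃ Λ : Finset (Fin p), Λ.card ≤ s ∧
        ∀ i ∉ Λ, ∀ τ : Fin (t + 1), Y i τ = ((C * A ^ (τ : ℕ)).mulVec xtrue) i) →
      {x : Fin n → ℝ | ∃ Γ : Finset (Fin p), Γ.card = p - s ∧
        ∀ i ∈ Γ, ∀ τ : Fin (t + 1), ((C * A ^ (τ : ℕ)).mulVec x) i = Y i τ}
        = {xtrue}) :=
  plausible_state_unique_of_2s_sparse_observable_general ht A C hobs Y
end

section
/- Suppose the system is k-eigenvalue observable, i.e., for every complex eigenvalue λ of A there are at least k+1 indices i ∈ {1,…,p} such that λ is observable with respect to sensor i. Then the system is k-sparse observable, i.e., for every Γ ⊆ {1,…,p} with |Γ| = p − k, the pair (A, C_Γ) is observable. (Lemma 3, first part.) -/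
/-!
If `x ≠ 0` is killed by `C_i A^τ` for all `i ∈ Γ` and `τ < n`, then by Cayley–Hamilton it is
killed for all `τ`, so the unobservable subspace of `(A, C_Γ)` over `ℂ` is a nonzero
`A`-invariant subspace and therefore contains an eigenvector `v` of `A`, with `C_i v = 0` for
all `i ∈ Γ`. Its eigenvalue is observable by at least `k + 1` sensors, and `Γ` misses only `k`
of them, so some `i ∈ Γ` observes it, forcing `v = 0`.
-/

open Polynomial

namespace Matrix

variable {R ι m : Type*} [Fintype ι]

theorem exists_eigenvector_mem_of_mulVec_mem {K : Type*} [Field K] [IsAlgClosed K]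
    (M : Matrix ι ι K) (W : Submodule K (ι → K)) (hW : W ≠ ⊥)
    (hMW : ∀ v ∈ W, M *ᵥ v ∈ W) : ∃ μ : K, ∃ v ∈ W, v ≠ 0 ∧ M *ᵥ v = μ • v := by
  have : Nontrivial W := Submodule.nontrivial_iff_ne_bot.2 hW
  obtain ⟨μ, hμ⟩ := Module.End.exists_eigenvalue (M.mulVecLin.restrict hMW)
  obtain ⟨⟨v, hvW⟩, hv⟩ := hμ.exists_hasEigenvector
  exact ⟨μ, v, hvW, fun h => hv.2 (by simp [h]), congrArg Subtype.val hv.apply_eq_smul⟩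

variable [DecidableEq ι]

theorem exists_pow_eq_sum_pow_lt_card [CommRing R] (M : Matrix ι ι R) (τ : ℕ) :
    ∃ c : ℕ → R, M ^ τ = ∑ j ∈ Finset.range (Fintype.card ι), c j • M ^ j := by
  rcases subsingleton_or_nontrivial R with hR | hR
  · exact ⟨0, Subsingleton.elim _ _⟩
  rcases isEmpty_or_nonempty ι with hι | hι
  · exact ⟨0, Subsingleton.elim _ _⟩
  have hχ : M.charpoly ≠ 1 := fun h =>
    Fintype.card_pos.ne (by simpa [h] using M.charpoly_natDegree_eq_dim)
  refine ⟨(X ^ τ %ₘ M.charpoly).coeff, ?_⟩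
  rw [pow_eq_aeval_mod_charpoly, aeval_eq_sum_range']
  simpa using natDegree_modByMonic_lt (X ^ τ) M.charpoly_monic hχ

theorem mul_pow_mulVec_apply_eq_zero_of_forall_lt_card [CommRing R] (M : Matrix ι ι R)
    (N : Matrix m ι R) (x : ι → R) (i : m)
    (h : ∀ τ < Fintype.card ι, ((N * M ^ τ) *ᵥ x) i = 0) (τ : ℕ) :
    ((N * M ^ τ) *ᵥ x) i = 0 := by
  obtain ⟨c, hc⟩ := M.exists_pow_eq_sum_pow_lt_card τ
  simp only [hc, Matrix.mul_sum, Matrix.mul_smul, sum_mulVec, smul_mulVec, Finset.sum_apply,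
    Pi.smul_apply]
  exact Finset.sum_eq_zero fun j hj => by rw [h j (Finset.mem_range.1 hj), smul_zero]

theorem map_mul_pow_mulVec_apply {S : Type*} [CommRing R] [CommRing S] (f : R →+* S)
    (M : Matrix ι ι R) (N : Matrix m ι R) (x : ι → R) (τ : ℕ) (i : m) :
    ((N.map f * M.map f ^ τ) *ᵥ (f ∘ x)) i = f (((N * M ^ τ) *ᵥ x) i) := by
  rw [RingHom.map_mulVec, Matrix.map_mul]
  congr 3
  exact (map_pow f.mapMatrix M τ).symm

def unobservableSubspace [CommRing R] (M : Matrix ι ι R) (N : Matrix m ι R) (S : Set m) :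
    Submodule R (ι → R) :=
  ⨅ i ∈ S, ⨅ τ : ℕ, LinearMap.ker ((LinearMap.proj i).comp (N * M ^ τ).mulVecLin)

section unobservableSubspace

variable [CommRing R] {M : Matrix ι ι R} {N : Matrix m ι R} {S : Set m} {v : ι → R}

theorem mem_unobservableSubspace :
    v ∈ unobservableSubspace M N S ↔ ∀ i ∈ S, ∀ τ : ℕ, ((N * M ^ τ) *ᵥ v) i = 0 := by
  simp [unobservableSubspace]

theorem mulVec_mem_unobservableSubspace (hv : v ∈ unobservableSubspace M N S) :
    M *ᵥ v ∈ unobservableSubspace M N S := by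
  rw [mem_unobservableSubspace] at hv ⊢
  intro i hi τ
  simpa [mulVec_mulVec, Matrix.mul_assoc, ← pow_succ] using hv i hi (τ + 1)

end unobservableSubspace

theorem exists_eigenvector_of_unobservableSubspace_ne_bot {K : Type*} [Field K] [IsAlgClosed K]
    {M : Matrix ι ι K} {N : Matrix m ι K} {S : Set m} (hW : unobservableSubspace M N S ≠ ⊥) :
    ∃ μ : K, ∃ v : ι → K, v ≠ 0 ∧ M *ᵥ v = μ • v ∧ ∀ i ∈ S, (N *ᵥ v) i = 0 := by
  obtain ⟨μ, v, hvW, hv0, hMv⟩ :=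
    exists_eigenvector_mem_of_mulVec_mem M _ hW fun _ => mulVec_mem_unobservableSubspace
  refine ⟨μ, v, hv0, hMv, fun i hi => ?_⟩
  simpa using mem_unobservableSubspace.1 hvW i hi 0

end Matrix

open Matrix

theorem sparse_observable_of_eigenvalue_observable_general
    {n p k : ℕ}
    (A : Matrix (Fin n) (Fin n) ℝ) (C : Matrix (Fin p) (Fin n) ℝ)
    (heigobs : ∀ μ : ℂ,
      (∃ v : Fin n → ℂ, v ≠ 0 ∧ (A.map Complex.ofReal).mulVec v = μ • v) →
      k + 1 ≤ {i : Fin p | ∀ v : Fin n → ℂ,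
          (A.map Complex.ofReal).mulVec v = μ • v →
          ((C.map Complex.ofReal).mulVec v) i = 0 → v = 0}.ncard) :
    ∀ Γ : Finset (Fin p), Γ.card = p - k →
      ∀ x : Fin n → ℝ, (∀ i ∈ Γ, ∀ τ < n, ((C * A ^ τ).mulVec x) i = 0) → x = 0 := by
  classical
  intro Γ hΓ x hx
  by_contra hx0
  have hxW : Complex.ofReal ∘ x ∈
      unobservableSubspace (A.map Complex.ofReal) (C.map Complex.ofReal) Γ := by
    refine mem_unobservableSubspace.2 fun i hi τ => ?_
    refine (map_mul_pow_mulVec_apply Complex.ofRealHom A C x τ i).trans ?_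
    rw [mul_pow_mulVec_apply_eq_zero_of_forall_lt_card A C x i (by simpa using hx i hi) τ,
      map_zero]
  have hW : unobservableSubspace (A.map Complex.ofReal) (C.map Complex.ofReal) Γ ≠ ⊥ :=
    (Submodule.ne_bot_iff _).2 ⟨_, hxW, fun h => hx0 (funext fun j => by
      simpa using congrFun h j)⟩
  obtain ⟨μ, v, hv0, hAv, hCv⟩ := exists_eigenvector_of_unobservableSubspace_ne_bot hW
  set obs := {i : Fin p | ∀ v : Fin n → ℂ, (A.map Complex.ofReal).mulVec v = μ • v →
      ((C.map Complex.ofReal).mulVec v) i = 0 → v = 0}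
  have hobs : k + 1 ≤ obs.toFinset.card :=
    Set.ncard_eq_toFinset_card' obs ▸ heigobs μ ⟨v, hv0, hAv⟩
  obtain ⟨i, hi⟩ := Finset.inter_nonempty_of_card_lt_card_add_card
    (Finset.subset_univ Γ) (Finset.subset_univ obs.toFinset)
    (by simp only [Finset.card_univ, Fintype.card_fin]; omega)
  obtain ⟨hiΓ, hiobs⟩ := Finset.mem_inter.1 hi
  exact hv0 (Set.mem_toFinset.1 hiobs v hAv (hCv i hiΓ))

/-- Lemma 3, first part: if every complex eigenvalue of `A` is observable
with respect to at least `k+1` sensors, then the system is `k`-sparse observable. -/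
theorem sparse_observable_of_eigenvalue_observable
    {n p k : ℕ} (hk : k < p)
    (A : Matrix (Fin n) (Fin n) ℝ) (C : Matrix (Fin p) (Fin n) ℝ)
    (heigobs : ∀ μ : ℂ,
      (∃ v : Fin n → ℂ, v ≠ 0 ∧ (A.map Complex.ofReal).mulVec v = μ • v) →
      k + 1 ≤ {i : Fin p | ∀ v : Fin n → ℂ,
          (A.map Complex.ofReal).mulVec v = μ • v →
          ((C.map Complex.ofReal).mulVec v) i = 0 → v = 0}.ncard) :
    ∀ Γ : Finset (Fin p), Γ.card = p - k →
      ∀ x : Fin n → ℝ, (∀ i ∈ Γ, ∀ τ < n, ((C * A ^ τ).mulVec x) i = 0) → x = 0 :=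
  sparse_observable_of_eigenvalue_observable_general A C heigobs
end

section
/- Suppose the system is k-sparse observable, i.e., (A, C_Γ) is observable for every Γ ⊆ {1,…,p} with |Γ| = p − k, and suppose that every complex eigenvalue λ of A has geometric multiplicity one, i.e., dim_ℂ ker(A − λI) = 1. Then the system is k-eigenvalue observable, i.e., every complex eigenvalue of A is observable with respect to at least k+1 sensors. (Lemma 3, second part.) -/
/-!
Let `v` be an eigenvector of `A` for `μ`. If `μ` were observable with respect to at most `k`
sensors, at least `p - k` sensors `i` would each have a nonzero eigenvector in the kernel of `Cᵢ`;
since the eigenspace of `μ` is a line, that eigenvector is a multiple of `v`, so `Cᵢ v = 0`.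
Then `Cᵢ A^τ v = μ^τ Cᵢ v = 0` for all these sensors, and as `C` and `A` are real, the real and
imaginary parts of `v` are unobservable for a set of `p - k` sensors, forcing `v = 0`.
-/

open Matrix Module

lemma LinearMap.map_eq_zero_of_finrank_eq_one {K V W : Type*} [Field K] [AddCommGroup V]
    [Module K V] [AddCommGroup W] [Module K W] {S : Submodule K V} (hS : finrank K S = 1)
    (f : V →ₗ[K] W) {v w : V} (hv : v ∈ S) (hw : w ∈ S) (hw0 : w ≠ 0) (hfw : f w = 0) :
    f v = 0 := by
  obtain ⟨c, hc⟩ := (finrank_eq_one_iff_of_nonzero' (⟨w, hw⟩ : S) (by simpa using hw0)).mp hS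
    ⟨v, hv⟩
  rw [← show c • w = v from congrArg Subtype.val hc, map_smul, hfw, smul_zero]

lemma Set.exists_finset_card_eq_forall_notMem {ι : Type*} [Fintype ι] {S : Set ι} {k : ℕ}
    (hS : S.ncard ≤ k) : ∃ Γ : Finset ι, Γ.card = Fintype.card ι - k ∧ ∀ i ∈ Γ, i ∉ S := by
  classical
  have hcompl : Fintype.card ι - k ≤ Sᶜ.toFinset.card := by
    rw [← Set.ncard_eq_toFinset_card', Set.ncard_compl, Nat.card_eq_fintype_card]
    omega
  obtain ⟨Γ, hΓS, hΓ⟩ := Finset.exists_subset_card_eq hcompl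
  exact ⟨Γ, hΓ, fun i hi => Set.mem_toFinset.mp (hΓS hi)⟩

namespace Matrix

variable {m n : Type*} [Fintype n]

lemma mem_ker_mulVecLin_sub_smul_one_iff {R : Type*} [CommRing R] [DecidableEq n]
    {A : Matrix n n R} {μ : R} {v : n → R} :
    v ∈ LinearMap.ker (A - μ • (1 : Matrix n n R)).mulVecLin ↔ A *ᵥ v = μ • v := by
  rw [LinearMap.mem_ker, mulVecLin_apply, sub_mulVec, smul_mulVec, one_mulVec, sub_eq_zero]

lemma mul_pow_mulVec_of_mulVec_eq_smul {R : Type*} [CommSemiring R] [DecidableEq n]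
    {A : Matrix n n R} {μ : R} {v : n → R} (hv : A *ᵥ v = μ • v) (C : Matrix m n R) (τ : ℕ) :
    (C * A ^ τ) *ᵥ v = μ ^ τ • (C *ᵥ v) := by
  have hpow : (A ^ τ) *ᵥ v = μ ^ τ • v := by
    induction τ with
    | zero => simp
    | succ t ih => rw [pow_succ, ← mulVec_mulVec, hv, mulVec_smul, ih, smul_smul, pow_succ']
  rw [← mulVec_mulVec, hpow, mulVec_smul]

lemma re_map_ofReal_mulVec (M : Matrix m n ℝ) (v : n → ℂ) (i : m) :
    ((M.map Complex.ofReal *ᵥ v) i).re = (M *ᵥ fun j => (v j).re) i := by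
  simp [mulVec, dotProduct, Complex.mul_re]

lemma im_map_ofReal_mulVec (M : Matrix m n ℝ) (v : n → ℂ) (i : m) :
    ((M.map Complex.ofReal *ᵥ v) i).im = (M *ᵥ fun j => (v j).im) i := by
  simp [mulVec, dotProduct, Complex.mul_im]

lemma map_ofReal_mul_pow_mulVec_of_mulVec_eq_smul [DecidableEq n] {A : Matrix n n ℝ} {μ : ℂ}
    {v : n → ℂ} (hv : A.map Complex.ofReal *ᵥ v = μ • v) (C : Matrix m n ℝ) (τ : ℕ) :
    (C * A ^ τ).map Complex.ofReal *ᵥ v = μ ^ τ • (C.map Complex.ofReal *ᵥ v) := by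
  have hmap : (C * A ^ τ).map Complex.ofReal = C.map Complex.ofReal * A.map Complex.ofReal ^ τ :=
    (Matrix.map_mul (f := Complex.ofRealHom)).trans
      (congrArg _ (Matrix.map_pow A Complex.ofRealHom τ))
  rw [hmap, mul_pow_mulVec_of_mulVec_eq_smul hv]

end Matrix

theorem eigenvalue_observable_of_sparse_observable_general
    {n p k : ℕ}
    (A : Matrix (Fin n) (Fin n) ℝ) (C : Matrix (Fin p) (Fin n) ℝ)
    (hobs : ∀ Γ : Finset (Fin p), Γ.card = p - k →
        ∀ x : Fin n → ℝ, (∀ i ∈ Γ, ∀ τ < n, ((C * A ^ τ).mulVec x) i = 0) → x = 0)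
    (hgeo : ∀ μ : ℂ,
      (∃ v : Fin n → ℂ, v ≠ 0 ∧ (A.map Complex.ofReal).mulVec v = μ • v) →
      Module.finrank ℂ
        (LinearMap.ker (Matrix.mulVecLin
          (A.map Complex.ofReal - μ • (1 : Matrix (Fin n) (Fin n) ℂ)))) = 1) :
    ∀ μ : ℂ,
      (∃ v : Fin n → ℂ, v ≠ 0 ∧ (A.map Complex.ofReal).mulVec v = μ • v) →
      k + 1 ≤ {i : Fin p | ∀ v : Fin n → ℂ,
          (A.map Complex.ofReal).mulVec v = μ • v →
          ((C.map Complex.ofReal).mulVec v) i = 0 → v = 0}.ncard := by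
  rintro μ ⟨v, hv0, hv⟩
  by_contra! hfew
  obtain ⟨Γ, hΓcard, hΓ⟩ := Set.exists_finset_card_eq_forall_notMem (Nat.le_of_lt_succ hfew)
  rw [Fintype.card_fin] at hΓcard
  have hCv : ∀ i ∈ Γ, ((C.map Complex.ofReal) *ᵥ v) i = 0 := by
    intro i hi
    obtain ⟨w, hw, hwi, hw0⟩ : ∃ w, A.map Complex.ofReal *ᵥ w = μ • w ∧
        (C.map Complex.ofReal *ᵥ w) i = 0 ∧ w ≠ 0 := by
      simpa using hΓ i hi
    exact LinearMap.map_eq_zero_of_finrank_eq_one (hgeo μ ⟨v, hv0, hv⟩)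
      ((LinearMap.proj i).comp (C.map Complex.ofReal).mulVecLin)
      (mem_ker_mulVecLin_sub_smul_one_iff.mpr hv) (mem_ker_mulVecLin_sub_smul_one_iff.mpr hw)
      hw0 hwi
  have hobserved : ∀ i ∈ Γ, ∀ τ, (((C * A ^ τ).map Complex.ofReal) *ᵥ v) i = 0 := by
    intro i hi τ
    rw [map_ofReal_mul_pow_mulVec_of_mulVec_eq_smul hv, Pi.smul_apply, hCv i hi, smul_zero]
  have hre : (fun j => (v j).re) = 0 := hobs Γ hΓcard _ fun i hi τ _ => by
    rw [← re_map_ofReal_mulVec, hobserved i hi τ, Complex.zero_re]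
  have him : (fun j => (v j).im) = 0 := hobs Γ hΓcard _ fun i hi τ _ => by
    rw [← im_map_ofReal_mulVec, hobserved i hi τ, Complex.zero_im]
  exact hv0 (funext fun j => Complex.ext (congrFun hre j) (congrFun him j))

/-- Lemma 3, second part: if the system is `k`-sparse observable and
every complex eigenvalue of `A` has geometric multiplicity one, then every complex
eigenvalue of `A` is observable with respect to at least `k+1` sensors. -/
theorem eigenvalue_observable_of_sparse_observable
    {n p k : ℕ} (hk : k < p)
    (A : Matrix (Fin n) (Fin n) ℝ) (C : Matrix (Fin p) (Fin n) ℝ)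
    (hobs : ∀ Γ : Finset (Fin p), Γ.card = p - k →
        ∀ x : Fin n → ℝ, (∀ i ∈ Γ, ∀ τ < n, ((C * A ^ τ).mulVec x) i = 0) → x = 0)
    (hgeo : ∀ μ : ℂ,
      (∃ v : Fin n → ℂ, v ≠ 0 ∧ (A.map Complex.ofReal).mulVec v = μ • v) →
      Module.finrank ℂ
        (LinearMap.ker (Matrix.mulVecLin
          (A.map Complex.ofReal - μ • (1 : Matrix (Fin n) (Fin n) ℂ)))) = 1) :
    ∀ μ : ℂ,
      (∃ v : Fin n → ℂ, v ≠ 0 ∧ (A.map Complex.ofReal).mulVec v = μ • v) →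
      k + 1 ≤ {i : Fin p | ∀ v : Fin n → ℂ,
          (A.map Complex.ofReal).mulVec v = μ • v →
          ((C.map Complex.ofReal).mulVec v) i = 0 → v = 0}.ncard :=
  eigenvalue_observable_of_sparse_observable_general A C hobs hgeo
end

section
/- Let A ∈ ℂ^{n×n}, let λ_1,…,λ_r be the distinct complex eigenvalues of A, let V^j = ker((A − λ_j I)^n) ⊆ ℂ^n be the generalized eigenspaces, let C ∈ ℂ^{m×n}, and let t ≥ n−1. If v_j ∈ V^j for j = 1,…,r satisfy C A^τ (v_1 + ⋯ + v_r) = 0 for all 0 ≤ τ ≤ t, then C A^τ v_j = 0 for all j and all 0 ≤ τ ≤ t. Equivalently, the subspaces {𝒪(V^j)}_{j=1,…,r} of ℂ^{m(t+1)}, where 𝒪 x = (C A^τ x)_{0 ≤ τ ≤ t}, form an independent family. (Independence of generalized-eigenspace responses, underlying Lemma 4.) -/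
/-!
By Cayley–Hamilton every power of `A` is a polynomial in `A` of degree `< n`, so a response
that vanishes up to horizon `n - 1` satisfies `C p(A) x = 0` for every polynomial `p`. Since
the polynomials `(X - λ_k)^n` are pairwise coprime, a Bézout identity gives a polynomial `q_j`
with `q_j(A) (v_1 + ⋯ + v_r) = v_j`; hence `C A^τ v_j = C (X^τ q_j)(A) (v_1 + ⋯ + v_r) = 0`.
-/

open Matrix Polynomial

namespace Matrix

variable {ι κ R : Type*} [Fintype ι] [DecidableEq ι]

theorem mul_aeval_mulVec_eq_zero [CommRing R] [Nontrivial R] (A : Matrix ι ι R)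
    (C : Matrix κ ι R) {x : ι → R} (hx : ∀ τ < Fintype.card ι, (C * A ^ τ) *ᵥ x = 0)
    (p : R[X]) : (C * aeval A p) *ᵥ x = 0 := by
  cases isEmpty_or_nonempty ι
  · rw [Subsingleton.elim x 0, mulVec_zero]
  have hdeg : (p %ₘ A.charpoly).natDegree < Fintype.card ι := by
    have hne : A.charpoly ≠ 1 := fun h =>
      Fintype.card_pos.ne (by simpa [h] using A.charpoly_natDegree_eq_dim)
    simpa [A.charpoly_natDegree_eq_dim] using
      natDegree_modByMonic_lt p A.charpoly_monic hne
  rw [aeval_eq_aeval_mod_charpoly, aeval_eq_sum_range' hdeg, Matrix.mul_sum, sum_mulVec]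
  refine Finset.sum_eq_zero fun i hi => ?_
  rw [Matrix.mul_smul, smul_mulVec, hx i (Finset.mem_range.mp hi), smul_zero]

theorem aeval_mulVec_eq_zero_of_dvd [CommRing R] {A : Matrix ι ι R} {μ : R} {N : ℕ}
    {v : ι → R} (hv : ((A - μ • 1) ^ N) *ᵥ v = 0) {p : R[X]} (hp : (X - C μ) ^ N ∣ p) :
    aeval A p *ᵥ v = 0 := by
  obtain ⟨q, rfl⟩ := hp
  have hfactor : aeval A ((X - C μ) ^ N) = (A - μ • 1) ^ N := by
    simp [Algebra.algebraMap_eq_smul_one]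
  rw [mul_comm, map_mul, ← mulVec_mulVec, hfactor, hv, mulVec_zero]

theorem exists_aeval_mulVec_sum_eq {K : Type*} [Field K] {A : Matrix ι ι K}
    {r : Type*} [Fintype r] [DecidableEq r] {lam : r → K} (hlam : Function.Injective lam)
    {N : ℕ} {v : r → ι → K} (hv : ∀ k, ((A - lam k • 1) ^ N) *ᵥ v k = 0) (j : r) :
    ∃ q : K[X], aeval A q *ᵥ ∑ k, v k = v j := by
  set b : K[X] := ∏ k ∈ Finset.univ.erase j, (X - C (lam k)) ^ N
  have hcop : IsCoprime ((X - C (lam j)) ^ N) b :=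
    IsCoprime.prod_right fun k hk =>
      (pairwise_coprime_X_sub_C hlam (Finset.ne_of_mem_erase hk).symm).pow
  obtain ⟨u, w, huw⟩ := hcop
  refine ⟨w * b, ?_⟩
  rw [mulVec_sum, Finset.sum_eq_single j]
  · rw [show w * b = 1 - u * (X - C (lam j)) ^ N by rw [← huw]; ring, map_sub, map_one,
      sub_mulVec, one_mulVec, aeval_mulVec_eq_zero_of_dvd (hv j) (dvd_mul_left _ _), sub_zero]
  · intro k _ hkj
    exact aeval_mulVec_eq_zero_of_dvd (hv k)
      ((Finset.dvd_prod_of_mem _ (Finset.mem_erase.mpr ⟨hkj, Finset.mem_univ k⟩)).mul_left w)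
  · exact fun h => absurd (Finset.mem_univ j) h

end Matrix

theorem generalized_eigenspace_responses_independent_general
    {n m r t : ℕ} (ht : n - 1 ≤ t)
    (A : Matrix (Fin n) (Fin n) ℂ) (C : Matrix (Fin m) (Fin n) ℂ)
    (lam : Fin r → ℂ) (hlam : Function.Injective lam)
    (v : Fin r → Fin n → ℂ)
    (hv : ∀ j, ((A - lam j • 1) ^ n).mulVec (v j) = 0)
    (hsum : ∀ τ ≤ t, (C * A ^ τ).mulVec (∑ j, v j) = 0) :
    ∀ j, ∀ τ ≤ t, (C * A ^ τ).mulVec (v j) = 0 := by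
  intro j τ _
  obtain ⟨q, hq⟩ := exists_aeval_mulVec_sum_eq hlam hv j
  have hresponse : ∀ p : ℂ[X], (C * aeval A p) *ᵥ ∑ k, v k = 0 :=
    mul_aeval_mulVec_eq_zero A C fun σ hσ => hsum σ (by rw [Fintype.card_fin] at hσ; omega)
  calc (C * A ^ τ) *ᵥ v j = (C * aeval A (X ^ τ * q)) *ᵥ ∑ k, v k := by
        rw [← hq, mulVec_mulVec, map_mul, map_pow, aeval_X, Matrix.mul_assoc]
    _ = 0 := hresponse _

/-- independence of generalized-eigenspace responses.  If vectors `v j`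
lie in the generalized eigenspaces of distinct eigenvalues `lam j` of `A`, and the
response of their sum vanishes over the horizon `t ≥ n - 1`, then the response of each
`v j` vanishes over that horizon. -/
theorem generalized_eigenspace_responses_independent
    {n m r t : ℕ} (ht : n - 1 ≤ t)
    (A : Matrix (Fin n) (Fin n) ℂ) (C : Matrix (Fin m) (Fin n) ℂ)
    (lam : Fin r → ℂ) (hlam : Function.Injective lam)
    (heig : ∀ j, ∃ w : Fin n → ℂ, w ≠ 0 ∧ A.mulVec w = lam j • w)
    (v : Fin r → Fin n → ℂ)
    (hv : ∀ j, ((A - lam j • 1) ^ n).mulVec (v j) = 0)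
    (hsum : ∀ τ ≤ t, (C * A ^ τ).mulVec (∑ j, v j) = 0) :
    ∀ j, ∀ τ ≤ t, (C * A ^ τ).mulVec (v j) = 0 :=
  generalized_eigenspace_responses_independent_general ht A C lam hlam v hv hsum
end

section
/- Let x ∈ ℝ^n with generalized-eigenspace components x_j = P_j x, fix a sensor i, and let w_1,…,w_r ∈ ℝ^{t+1} be such that each w_j lies in 𝒪_i(V^j), i.e., w_j = 𝒪_i v_j for some v_j ∈ V^j. Then 𝒪_i x = w_1 + ⋯ + w_r if and only if 𝒪_i x_j = w_j for every j = 1,…,r. (Lemma 4, claim 2: equivalence between full-state consistency and subspace-wise consistency.) -/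
/-!
`(⇐)` is linearity of `𝒪_i` together with `x = ∑ P_j x`. For `(⇒)` write `w_j = 𝒪_i v_j` with
`v_j ∈ V^j` and put `u_j = P_j x - v_j ∈ V^j`. The output of `z = ∑ u_j` vanishes at times
`0, …, t`, and as `t ≥ n - 1` Cayley–Hamilton gives `C_i f(A) z = 0` for every polynomial `f`.
The polynomials `(X - λ_j)^n` are pairwise coprime, so each component is `u_j = q_j(A) z` for some
polynomial `q_j`, whence `C_i A^τ u_j = C_i (X^τ q_j)(A) z = 0`, that is `𝒪_i (P_j x) = w_j`.
-/

open Matrix Polynomial Function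

namespace Matrix

variable {R n : Type*} [CommRing R] [Fintype n] [DecidableEq n]

theorem map_aeval_eq_zero_of_map_pow_eq_zero [Nontrivial R] {M : Type*} [AddCommGroup M]
    [Module R M] (A : Matrix n n R) (φ : Matrix n n R →ₗ[R] M)
    (h : ∀ k < Fintype.card n, φ (A ^ k) = 0) (f : R[X]) : φ (aeval A f) = 0 := by
  rw [← aeval_modByMonic_eq_self_of_root A.aeval_self_charpoly,
    aeval_eq_sum_range, map_sum]
  refine Finset.sum_eq_zero fun k _ => ?_
  by_cases hk : k < Fintype.card n
  · rw [map_smul, h k hk, smul_zero]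
  · rw [coeff_eq_zero_of_degree_lt, zero_smul, map_zero]
    calc (f %ₘ A.charpoly).degree < A.charpoly.degree := degree_modByMonic_lt _ A.charpoly_monic
      _ ≤ k := by rw [A.charpoly_degree_eq_dim]; exact_mod_cast not_lt.mp hk

theorem exists_aeval_mulVec_sum_eq_s7 {ι : Type*} [Fintype ι] [DecidableEq ι] (A : Matrix n n R)
    {p : ι → R[X]} (hp : Pairwise (IsCoprime on p)) {u : ι → n → R}
    (hu : ∀ k, aeval A (p k) *ᵥ u k = 0) (j : ι) : ∃ q : R[X], aeval A q *ᵥ ∑ k, u k = u j := by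
  obtain ⟨a, b, hab⟩ : IsCoprime (p j) (∏ k ∈ Finset.univ.erase j, p k) :=
    IsCoprime.prod_right fun k hk => hp (Finset.ne_of_mem_erase hk).symm
  refine ⟨b * ∏ k ∈ Finset.univ.erase j, p k, ?_⟩
  rw [mulVec_sum, Finset.sum_eq_single j]
  · rw [← sub_eq_iff_eq_add'.mpr hab.symm, map_sub, sub_mulVec, map_mul, ← mulVec_mulVec, hu,
      mulVec_zero, map_one, one_mulVec, sub_zero]
  · intro k _ hkj
    obtain ⟨c, hc⟩ := Finset.dvd_prod_of_mem p (Finset.mem_erase.mpr ⟨hkj, Finset.mem_univ k⟩)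
    rw [hc, mul_left_comm, mul_comm, map_mul, ← mulVec_mulVec, hu, mulVec_zero]
  · exact fun h => absurd (Finset.mem_univ j) h

end Matrix

section SensorResponse

variable {R m n : Type*} [CommRing R] [Fintype n]

/-- `sensorResponse C i y (A ^ τ)` is the entry `(𝒪_i y)_τ` of the observability map. -/
def sensorResponse (C : Matrix m n R) (i : m) : (n → R) →ₗ[R] Matrix n n R →ₗ[R] R :=
  LinearMap.mk₂ R (fun y M => ((C * M) *ᵥ y) i)
    (fun y y' M => by simp [mulVec_add])
    (fun c y M => by simp [mulVec_smul])
    (fun y M M' => by simp [Matrix.mul_add, add_mulVec])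
    (fun c y M => by simp [smul_mulVec])

variable (C : Matrix m n R) (i : m)

@[simp]
theorem sensorResponse_apply (y : n → R) (M : Matrix n n R) :
    sensorResponse C i y M = ((C * M) *ᵥ y) i := rfl

theorem sensorResponse_mulVec (B M : Matrix n n R) (y : n → R) :
    sensorResponse C i (B *ᵥ y) M = sensorResponse C i y (M * B) := by
  simp [Matrix.mul_assoc, mulVec_mulVec]

theorem sensorResponse_pow_eq_zero_of_sum [DecidableEq n] [Nontrivial R] {ι : Type*} [Fintype ι]
    [DecidableEq ι] (A : Matrix n n R) {p : ι → R[X]} (hp : Pairwise (IsCoprime on p))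
    {u : ι → n → R} (hu : ∀ k, aeval A (p k) *ᵥ u k = 0)
    (hz : ∀ k < Fintype.card n, sensorResponse C i (∑ l, u l) (A ^ k) = 0) (j : ι) (τ : ℕ) :
    sensorResponse C i (u j) (A ^ τ) = 0 := by
  obtain ⟨q, hq⟩ := exists_aeval_mulVec_sum_eq_s7 A hp hu j
  rw [← hq, sensorResponse_mulVec, ← aeval_X_pow (R := R), ← map_mul]
  exact map_aeval_eq_zero_of_map_pow_eq_zero A _ hz _

end SensorResponse

theorem full_consistency_iff_subspace_consistency_general
    {n p r t : ℕ} (ht : n - 1 ≤ t)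
    (A : Matrix (Fin n) (Fin n) ℝ) (C : Matrix (Fin p) (Fin n) ℝ)
    (lam : Fin r → ℝ) (hlam : Function.Injective lam)
    (P : Fin r → Matrix (Fin n) (Fin n) ℝ)
    (hPmem : ∀ j, ∀ x : Fin n → ℝ, ((A - lam j • 1) ^ n).mulVec ((P j).mulVec x) = 0)
    (hPsum : ∀ x : Fin n → ℝ, ∑ j, (P j).mulVec x = x)
    (i : Fin p) (x : Fin n → ℝ)
    (w : Fin r → Fin (t + 1) → ℝ)
    (hw : ∀ j, ∃ v : Fin n → ℝ, ((A - lam j • 1) ^ n).mulVec v = 0 ∧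
        w j = fun τ : Fin (t + 1) => ((C * A ^ (τ : ℕ)).mulVec v) i) :
    ((fun τ : Fin (t + 1) => ((C * A ^ (τ : ℕ)).mulVec x) i) = ∑ j, w j) ↔
      (∀ j, (fun τ : Fin (t + 1) =>
          ((C * A ^ (τ : ℕ)).mulVec ((P j).mulVec x)) i) = w j) := by
  have hPx : ∀ M, ∑ j, sensorResponse C i (P j *ᵥ x) M = sensorResponse C i x M := fun M => by
    rw [← LinearMap.sum_apply, ← map_sum, hPsum]
  constructor
  · intro h j
    choose v hv hwv using hw
    obtain rfl : w = fun j (τ : Fin (t + 1)) => sensorResponse C i (v j) (A ^ (τ : ℕ)) :=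
      funext hwv
    have hker : ∀ k, aeval A ((X - Polynomial.C (lam k)) ^ n) *ᵥ (P k *ᵥ x - v k) = 0 := by
      intro k
      simp [mulVec_sub, hPmem, hv, Algebra.algebraMap_eq_smul_one]
    have hwindow : ∀ k < Fintype.card (Fin n),
        sensorResponse C i (∑ l, (P l *ᵥ x - v l)) (A ^ k) = 0 := by
      intro k hk
      rw [Finset.sum_sub_distrib, map_sub, LinearMap.sub_apply, map_sum, LinearMap.sum_apply, hPx,
        sub_eq_zero]
      simpa [Finset.sum_apply] using congrFun h ⟨k, by rw [Fintype.card_fin] at hk; omega⟩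
    have hcop : Pairwise (IsCoprime on fun k => (X - Polynomial.C (lam k)) ^ n) :=
      (pairwise_coprime_X_sub_C hlam).mono fun _ _ h => h.pow
    funext τ
    have hτ := sensorResponse_pow_eq_zero_of_sum C i A hcop hker hwindow j τ
    exact sub_eq_zero.mp (by simpa [mulVec_sub] using hτ)
  · intro h
    funext τ
    rw [Finset.sum_apply]
    exact (hPx _).symm.trans (Finset.sum_congr rfl fun j _ => congrFun (h j) τ)

/-- Lemma 4, claim 2: for a sensor `i`, the full-state response equation
`𝒪_i x = w_1 + ⋯ + w_r`, where each `w j` is the response of some vector of the `j`-th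
generalized eigenspace, holds iff the subspace-wise equations `𝒪_i (P_j x) = w_j`
hold for every `j`. -/
theorem full_consistency_iff_subspace_consistency
    {n p r t : ℕ} (ht : n - 1 ≤ t)
    (A : Matrix (Fin n) (Fin n) ℝ) (C : Matrix (Fin p) (Fin n) ℝ)
    (lam : Fin r → ℝ) (hlam : Function.Injective lam)
    (heig : ∀ j, ∃ w : Fin n → ℝ, w ≠ 0 ∧ A.mulVec w = lam j • w)
    (P : Fin r → Matrix (Fin n) (Fin n) ℝ)
    (hPmem : ∀ j, ∀ x : Fin n → ℝ, ((A - lam j • 1) ^ n).mulVec ((P j).mulVec x) = 0)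
    (hPsum : ∀ x : Fin n → ℝ, ∑ j, (P j).mulVec x = x)
    (i : Fin p) (x : Fin n → ℝ)
    (w : Fin r → Fin (t + 1) → ℝ)
    (hw : ∀ j, ∃ v : Fin n → ℝ, ((A - lam j • 1) ^ n).mulVec v = 0 ∧
        w j = fun τ : Fin (t + 1) => ((C * A ^ (τ : ℕ)).mulVec v) i) :
    ((fun τ : Fin (t + 1) => ((C * A ^ (τ : ℕ)).mulVec x) i) = ∑ j, w j) ↔
      (∀ j, (fun τ : Fin (t + 1) =>
          ((C * A ^ (τ : ℕ)).mulVec ((P j).mulVec x)) i) = w j) :=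
  full_consistency_iff_subspace_consistency_general ht A C lam hlam P hPmem hPsum i x w hw
end

section
/- Let A ∈ ℂ^{n×n}, let λ be an eigenvalue of A, and let C_i ∈ ℂ^{1×n}. Suppose λ is observable with respect to sensor i, i.e., the only v ∈ ℂ^n with Av = λv and C_i v = 0 is v = 0. Then the observability map of sensor i is injective on the generalized eigenspace of λ: if x ∈ ker((A − λ I)^n) satisfies C_i A^τ x = 0 for all 0 ≤ τ ≤ n−1, then x = 0. (Injectivity of the per-sensor observability map on an observed generalized eigenspace.) -/
/-!
Put `N = A - λ I`. Every `N ^ k` with `k < n` is a polynomial of degree `< n` in `A`, so the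
hypothesis `C_i A ^ τ x = 0` for `τ < n` gives `C_i N ^ k x = 0` for `k < n`. If `N ^ k x = 0`
with `k ≥ 1`, then `v = N ^ (k - 1) x` is an eigenvector of `λ` (or zero) with `C_i v = 0`, so
observability forces `v = 0`; descending from `k = n` yields `x = 0`.
-/

open Matrix Polynomial

namespace Matrix

variable {ι R : Type*} [Fintype ι] [DecidableEq ι] [CommRing R]

theorem dotProduct_aeval_mulVec_eq_zero_of_degree_lt {A : Matrix ι ι R} {c x : ι → R} {m : ℕ}
    (h : ∀ τ < m, c ⬝ᵥ (A ^ τ) *ᵥ x = 0) {p : R[X]} (hp : p.degree < m) :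
    c ⬝ᵥ aeval A p *ᵥ x = 0 := by
  classical
  let L : R[X] →ₗ[R] R :=
    { toFun p := c ⬝ᵥ aeval A p *ᵥ x
      map_add' p q := by simp [add_mulVec]
      map_smul' r p := by simp [smul_mulVec] }
  suffices degreeLT R m ≤ LinearMap.ker L from this (mem_degreeLT.mpr hp)
  rw [degreeLT_eq_span_X_pow, Submodule.span_le, Finset.coe_image, Set.image_subset_iff]
  intro τ hτ
  simpa [L] using h τ (Finset.mem_range.mp hτ)

theorem dotProduct_sub_smul_one_pow_mulVec_eq_zero {A : Matrix ι ι R} {c x : ι → R} {m : ℕ}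
    (h : ∀ τ < m, c ⬝ᵥ (A ^ τ) *ᵥ x = 0) (μ : R) {k : ℕ} (hk : k < m) :
    c ⬝ᵥ (A - μ • 1) ^ k *ᵥ x = 0 := by
  have hdeg : ((X - C μ) ^ k).degree < (m : WithBot ℕ) := by
    refine (degree_pow_le _ _).trans_lt ?_
    calc k • (X - C μ).degree ≤ k • (1 : WithBot ℕ) := by gcongr; exact degree_X_sub_C_le μ
      _ < m := by simpa using hk
  simpa [Algebra.algebraMap_eq_smul_one] using
    dotProduct_aeval_mulVec_eq_zero_of_degree_lt h hdeg

theorem eq_zero_of_pow_mulVec_eq_zero {N : Matrix ι ι R} {c : ι → R}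
    (hker : ∀ v, N *ᵥ v = 0 → c ⬝ᵥ v = 0 → v = 0) {x : ι → R} {k : ℕ}
    (hx : (N ^ k) *ᵥ x = 0) (hc : ∀ j < k, c ⬝ᵥ (N ^ j) *ᵥ x = 0) : x = 0 := by
  induction k with
  | zero => simpa using hx
  | succ k ih =>
    have hNv : N *ᵥ (N ^ k *ᵥ x) = 0 := by rwa [mulVec_mulVec, ← pow_succ']
    exact ih (hker _ hNv (hc k k.lt_succ_self)) fun j hj => hc j (hj.trans k.lt_succ_self)

end Matrix

theorem obs_injective_on_generalized_eigenspace_general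
    {n : ℕ} (A : Matrix (Fin n) (Fin n) ℂ) (Ci : Fin n → ℂ) (lam : ℂ)
    (hobs : ∀ v : Fin n → ℂ, A.mulVec v = lam • v → Ci ⬝ᵥ v = 0 → v = 0)
    (x : Fin n → ℂ)
    (hx : ((A - lam • 1) ^ n).mulVec x = 0)
    (hzero : ∀ τ < n, Ci ⬝ᵥ (A ^ τ).mulVec x = 0) :
    x = 0 := by
  have hker : ∀ v, (A - lam • 1) *ᵥ v = 0 → Ci ⬝ᵥ v = 0 → v = 0 := fun v hv =>
    hobs v (by rwa [sub_mulVec, smul_mulVec, one_mulVec, sub_eq_zero] at hv)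
  exact eq_zero_of_pow_mulVec_eq_zero hker hx
    fun k hk => dotProduct_sub_smul_one_pow_mulVec_eq_zero hzero lam hk

/-- if an eigenvalue `lam` of `A` is observable with respect to sensor `i`
(with row vector `Ci`), then the observability map of sensor `i` is injective on the
generalized eigenspace of `lam`. -/
theorem obs_injective_on_generalized_eigenspace
    {n : ℕ} (A : Matrix (Fin n) (Fin n) ℂ) (Ci : Fin n → ℂ) (lam : ℂ)
    (heig : ∃ w : Fin n → ℂ, w ≠ 0 ∧ A.mulVec w = lam • w)
    (hobs : ∀ v : Fin n → ℂ, A.mulVec v = lam • v → Ci ⬝ᵥ v = 0 → v = 0)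
    (x : Fin n → ℂ)
    (hx : ((A - lam • 1) ^ n).mulVec x = 0)
    (hzero : ∀ τ < n, Ci ⬝ᵥ (A ^ τ).mulVec x = 0) :
    x = 0 :=
  obs_injective_on_generalized_eigenspace_general A Ci lam hobs x hx hzero
end

section
/- Fix a subspace index j and a sensor i such that λ_j is observable with respect to sensor i. Then for any data vectors Y_1,…,Y_p ∈ ℝ^{t+1}, there is at most one x_j ∈ V^j that agrees with sensor i. (Uniqueness of the substate voted for by each observing sensor, underlying the pre-processing and threshold-voting steps.) -/
/-! The difference `d` of the two total states is invisible to sensor `i` at times `0, …, t`, so by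
Cayley–Hamilton (`t ≥ n - 1`) `C_i q(A) d = 0` for every polynomial `q`. The polynomial
`f = ∏_{k ≠ j} (X - λ_k)^n` annihilates the components of `d` outside `V^j`, so `w = f(A)(x_j - x_j')`
lies in `V^j` and `C_i q(A) w = 0` for all `q`. If `w ≠ 0`, the last nonzero vector `(A - λ_j)^l w` is a
real eigenvector of `λ_j` that sensor `i` does not see, contradicting observability. Finally `f` is
coprime to `(X - λ_j)^n`, so `f(A)` is injective on `V^j` and `x_j = x_j'`. -/

open Matrix

noncomputable section

/-- Generalized eigenspace of `A` for the eigenvalue `μ`: `ker((A - μ I)^n)`. -/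
def genEig {n : ℕ} (A : Matrix (Fin n) (Fin n) ℝ) (μ : ℝ) : Set (Fin n → ℝ) :=
  {x | ((A - μ • 1) ^ n).mulVec x = 0}

/-- Observability map of sensor `i` over horizon `t`: `(𝒪_i x)_τ = C_i A^τ x`. -/
def obsMap {n p : ℕ} (t : ℕ) (A : Matrix (Fin n) (Fin n) ℝ)
    (C : Matrix (Fin p) (Fin n) ℝ) (i : Fin p) (x : Fin n → ℝ) : Fin (t + 1) → ℝ :=
  fun τ => ((C * A ^ (τ : ℕ)).mulVec x) i

/-- `x` is a plausible state for the data `Y`: some set `Γ` of `p - s` sensors is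
exactly explained by `x`. -/
def plausible {n p : ℕ} (t : ℕ) (A : Matrix (Fin n) (Fin n) ℝ)
    (C : Matrix (Fin p) (Fin n) ℝ) (s : ℕ) (Y : Fin p → Fin (t + 1) → ℝ)
    (x : Fin n → ℝ) : Prop :=
  ∃ Γ : Finset (Fin p), Γ.card = p - s ∧ ∀ i ∈ Γ, obsMap t A C i x = Y i

/-- The eigenvalue `μ` of `A` is observable with respect to sensor `i` (over `ℂ`). -/
def eigObs {n p : ℕ} (A : Matrix (Fin n) (Fin n) ℝ)
    (C : Matrix (Fin p) (Fin n) ℝ) (μ : ℝ) (i : Fin p) : Prop :=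
  ∀ v : Fin n → ℂ, (A.map Complex.ofReal).mulVec v = (μ : ℂ) • v →
    ((C.map Complex.ofReal).mulVec v) i = 0 → v = 0

/-- The substate `xj ∈ V^j` agrees with sensor `i`: some choice of substates in the
other generalized eigenspaces makes the total response match the data `Y i`. -/
def agrees {n p r : ℕ} (t : ℕ) (A : Matrix (Fin n) (Fin n) ℝ)
    (C : Matrix (Fin p) (Fin n) ℝ) (lam : Fin r → ℝ)
    (Y : Fin p → Fin (t + 1) → ℝ) (j : Fin r) (xj : Fin n → ℝ) (i : Fin p) : Prop :=
  ∃ z : Fin r → Fin n → ℝ, (∀ k, k ≠ j → z k ∈ genEig A (lam k)) ∧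
    obsMap t A C i (xj + ∑ k ∈ Finset.univ.erase j, z k) = Y i

/-- `X_j`: the substates in `V^j` that agree with at least `q + 1 - s` sensors for
which `λ_j` is observable. -/
def Xset {n p r : ℕ} (t : ℕ) (A : Matrix (Fin n) (Fin n) ℝ)
    (C : Matrix (Fin p) (Fin n) ℝ) (lam : Fin r → ℝ)
    (Y : Fin p → Fin (t + 1) → ℝ) (s q : ℕ) (j : Fin r) : Set (Fin n → ℝ) :=
  {xj | xj ∈ genEig A (lam j) ∧
    q + 1 - s ≤ {i : Fin p | eigObs A C (lam j) i ∧ agrees t A C lam Y j xj i}.ncard}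

/-- `I_j(xj)`: the sensors that do not agree with the substate `xj`. -/
def Iset {n p r : ℕ} (t : ℕ) (A : Matrix (Fin n) (Fin n) ℝ)
    (C : Matrix (Fin p) (Fin n) ℝ) (lam : Fin r → ℝ)
    (Y : Fin p → Fin (t + 1) → ℝ) (j : Fin r) (xj : Fin n → ℝ) : Set (Fin p) :=
  {i | ¬ agrees t A C lam Y j xj i}

open Polynomial

namespace Matrix

variable {R : Type*} [CommRing R] {m : Type*} [Fintype m] [DecidableEq m]

theorem dotProduct_aeval_mulVec_eq_zero (A : Matrix m m R) (c d : m → R)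
    (h : ∀ k < Fintype.card m, c ⬝ᵥ (A ^ k *ᵥ d) = 0) (q : R[X]) :
    c ⬝ᵥ (aeval A q *ᵥ d) = 0 := by
  nontriviality R
  rcases isEmpty_or_nonempty m with hm | hm
  · simp [dotProduct]
  have hchar : A.charpoly ≠ 1 := fun h1 => by
    have hdim := A.charpoly_natDegree_eq_dim
    rw [h1, natDegree_one] at hdim
    exact Fintype.card_ne_zero hdim.symm
  have hdeg : (q %ₘ A.charpoly).natDegree < Fintype.card m := by
    simpa using natDegree_modByMonic_lt q A.charpoly_monic hchar
  rw [aeval_eq_aeval_mod_charpoly, aeval_eq_sum_range' hdeg, sum_mulVec, dotProduct_sum]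
  refine Finset.sum_eq_zero fun k hk => ?_
  rw [smul_mulVec, dotProduct_smul, h k (Finset.mem_range.mp hk), smul_zero]

theorem exists_pow_mulVec_ne_zero_and_mulVec_eq_zero (N : Matrix m m R) {w : m → R}
    (hw : w ≠ 0) {k : ℕ} (hk : N ^ k *ᵥ w = 0) :
    ∃ l, N ^ l *ᵥ w ≠ 0 ∧ N *ᵥ (N ^ l *ᵥ w) = 0 := by
  induction k with
  | zero => simp_all
  | succ k ih =>
    by_cases hkw : N ^ k *ᵥ w = 0
    · exact ih hkw
    · exact ⟨k, hkw, by rwa [mulVec_mulVec, ← pow_succ']⟩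

theorem mulVec_eq_zero_of_isCoprime (A : Matrix m m R) {p q : R[X]} (hpq : IsCoprime p q)
    {v : m → R} (hp : aeval A p *ᵥ v = 0) (hq : aeval A q *ᵥ v = 0) : v = 0 := by
  obtain ⟨a, b, hab⟩ := hpq
  have := congrArg (fun M => M *ᵥ v) (congrArg (aeval A) hab)
  simpa [add_mulVec, ← mulVec_mulVec, hp, hq] using this.symm

theorem aeval_prod_mulVec_sum_eq_zero (A : Matrix m m R) {ι : Type*} [DecidableEq ι]
    {s : Finset ι} (p : ι → R[X]) (v : ι → m → R) (hv : ∀ k ∈ s, aeval A (p k) *ᵥ v k = 0) :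
    aeval A (∏ k ∈ s, p k) *ᵥ ∑ k ∈ s, v k = 0 := by
  rw [mulVec_sum]
  refine Finset.sum_eq_zero fun k hk => ?_
  rw [← Finset.prod_erase_mul _ _ hk, map_mul, ← mulVec_mulVec, hv k hk, mulVec_zero]

theorem aeval_mulVec_comm (A : Matrix m m R) (p q : R[X]) (v : m → R) :
    aeval A p *ᵥ (aeval A q *ᵥ v) = aeval A q *ᵥ (aeval A p *ᵥ v) := by
  rw [mulVec_mulVec, mulVec_mulVec, ← map_mul, ← map_mul, mul_comm]

end Matrix

theorem isCoprime_X_sub_C_pow_prod {K ι : Type*} [Field K] {lam : ι → K}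
    (hlam : Function.Injective lam) {s : Finset ι} {j : ι} (hj : j ∉ s) (a b : ℕ) :
    IsCoprime ((X - C (lam j)) ^ a) (∏ k ∈ s, (X - C (lam k)) ^ b) :=
  IsCoprime.prod_right fun _ hk =>
    ((pairwise_coprime_X_sub_C hlam) (ne_of_mem_of_not_mem hk hj).symm).pow

section

variable {n p : ℕ} {A : Matrix (Fin n) (Fin n) ℝ}

theorem mem_genEig_iff {μ : ℝ} {x : Fin n → ℝ} :
    x ∈ genEig A μ ↔ aeval A ((X - Polynomial.C μ) ^ n) *ᵥ x = 0 := by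
  simp [genEig, Algebra.algebraMap_eq_smul_one]

theorem sub_mem_genEig {μ : ℝ} {x y : Fin n → ℝ} (hx : x ∈ genEig A μ) (hy : y ∈ genEig A μ) :
    x - y ∈ genEig A μ := by
  simp_all [genEig, mulVec_sub]

theorem aeval_mulVec_mem_genEig {μ : ℝ} {x : Fin n → ℝ} (hx : x ∈ genEig A μ) (q : ℝ[X]) :
    aeval A q *ᵥ x ∈ genEig A μ := by
  rw [mem_genEig_iff] at hx ⊢
  rw [aeval_mulVec_comm, hx, mulVec_zero]

theorem obsMap_sub (t : ℕ) (C : Matrix (Fin p) (Fin n) ℝ) (i : Fin p) (x y : Fin n → ℝ) :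
    obsMap t A C i (x - y) = obsMap t A C i x - obsMap t A C i y := by
  ext τ
  simp [obsMap, mulVec_sub]

theorem aeval_mulVec_apply_eq_zero_of_obsMap_eq_zero {t : ℕ} (ht : n - 1 ≤ t)
    {C : Matrix (Fin p) (Fin n) ℝ} {i : Fin p} {x : Fin n → ℝ} (hx : obsMap t A C i x = 0)
    (q : ℝ[X]) : (C *ᵥ (aeval A q *ᵥ x)) i = 0 := by
  refine dotProduct_aeval_mulVec_eq_zero A (C i) x (fun k hk => ?_) q
  rw [Fintype.card_fin] at hk
  have hk' := congrFun hx ⟨k, by omega⟩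
  rwa [obsMap, ← mulVec_mulVec] at hk'

theorem eigObs.eq_zero {C : Matrix (Fin p) (Fin n) ℝ} {μ : ℝ} {i : Fin p}
    (hobs : eigObs A C μ i) {v : Fin n → ℝ} (hAv : A *ᵥ v = μ • v)
    (hCv : (C *ᵥ v) i = 0) : v = 0 := by
  have hA : A.map Complex.ofReal *ᵥ (Complex.ofReal ∘ v) = (μ : ℂ) • (Complex.ofReal ∘ v) := by
    ext k
    exact (RingHom.map_mulVec Complex.ofRealHom A v k).symm.trans (by simp [hAv])
  have hC : (C.map Complex.ofReal *ᵥ (Complex.ofReal ∘ v)) i = 0 :=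
    (RingHom.map_mulVec Complex.ofRealHom C v i).symm.trans (by simp [hCv])
  ext k
  simpa using congrFun (hobs _ hA hC) k

theorem eigObs.eq_zero_of_mem_genEig {C : Matrix (Fin p) (Fin n) ℝ} {μ : ℝ} {i : Fin p}
    (hobs : eigObs A C μ i) {w : Fin n → ℝ} (hw : w ∈ genEig A μ)
    (hCw : ∀ q : ℝ[X], (C *ᵥ (aeval A q *ᵥ w)) i = 0) : w = 0 := by
  by_contra hw0
  obtain ⟨l, hl, hker⟩ := exists_pow_mulVec_ne_zero_and_mulVec_eq_zero (A - μ • 1) hw0 hw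
  refine hl (hobs.eq_zero ?_ ?_)
  · rwa [sub_mulVec, sub_eq_zero, smul_mulVec, one_mulVec] at hker
  · have hl' := hCw ((X - Polynomial.C μ) ^ l)
    rwa [map_pow, map_sub, aeval_X, aeval_C, Algebra.algebraMap_eq_smul_one] at hl'

end

theorem substate_unique_per_observing_sensor_general
    {n p r t : ℕ} (ht : n - 1 ≤ t)
    (A : Matrix (Fin n) (Fin n) ℝ) (C : Matrix (Fin p) (Fin n) ℝ)
    (lam : Fin r → ℝ) (hlam : Function.Injective lam)
    (Y : Fin p → Fin (t + 1) → ℝ)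
    (j : Fin r) (i : Fin p) (hobs : eigObs A C (lam j) i) :
    ∀ xj ∈ genEig A (lam j), ∀ xj' ∈ genEig A (lam j),
      agrees t A C lam Y j xj i → agrees t A C lam Y j xj' i → xj = xj' := by
  rintro xj hxj xj' hxj' ⟨z, hz, hY⟩ ⟨z', hz', hY'⟩
  set y := xj + ∑ k ∈ Finset.univ.erase j, z k with hy
  set y' := xj' + ∑ k ∈ Finset.univ.erase j, z' k with hy'
  set f : ℝ[X] := ∏ k ∈ Finset.univ.erase j, (X - Polynomial.C (lam k)) ^ n
  have hunobs := aeval_mulVec_apply_eq_zero_of_obsMap_eq_zero ht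
    (by rw [obsMap_sub, hY, hY', sub_self] : obsMap t A C i (y - y') = 0)
  have hf : aeval A f *ᵥ (y - y') = aeval A f *ᵥ (xj - xj') := by
    have hsplit : y - y' = (xj - xj') + ∑ k ∈ Finset.univ.erase j, (z k - z' k) := by
      rw [hy, hy', Finset.sum_sub_distrib]; abel
    rw [hsplit, mulVec_add, aeval_prod_mulVec_sum_eq_zero A _ _ fun k hk => mem_genEig_iff.mp
      (sub_mem_genEig (hz k (Finset.ne_of_mem_erase hk)) (hz' k (Finset.ne_of_mem_erase hk))),
      add_zero]
  have hfu : aeval A f *ᵥ (xj - xj') = 0 :=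
    hobs.eq_zero_of_mem_genEig (aeval_mulVec_mem_genEig (sub_mem_genEig hxj hxj') f) fun q => by
      rw [← hf, mulVec_mulVec _ (aeval A q), ← map_mul]; exact hunobs _
  have hcop := isCoprime_X_sub_C_pow_prod hlam (Finset.notMem_erase j Finset.univ) n n
  exact sub_eq_zero.mp (mulVec_eq_zero_of_isCoprime A hcop
    (mem_genEig_iff.mp (sub_mem_genEig hxj hxj')) hfu)

/-- if `λ_j` is observable with respect to sensor `i`, then at most one
substate in `V^j` agrees with sensor `i`. -/
theorem substate_unique_per_observing_sensor
    {n p r t : ℕ} (ht : n - 1 ≤ t)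
    (A : Matrix (Fin n) (Fin n) ℝ) (C : Matrix (Fin p) (Fin n) ℝ)
    (lam : Fin r → ℝ) (hlam : Function.Injective lam)
    (heig : ∀ j, ∃ w : Fin n → ℝ, w ≠ 0 ∧ A.mulVec w = lam j • w)
    (Y : Fin p → Fin (t + 1) → ℝ)
    (j : Fin r) (i : Fin p) (hobs : eigObs A C (lam j) i) :
    ∀ xj ∈ genEig A (lam j), ∀ xj' ∈ genEig A (lam j),
      agrees t A C lam Y j xj i → agrees t A C lam Y j xj' i → xj = xj' :=
  substate_unique_per_observing_sensor_general ht A C lam hlam Y j i hobs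
end
end

section
/- Assume 2s ≤ p, the system is 2s-sparse observable, and the data Y_1,…,Y_p are generated under at most s attacks from x_true. Then for every subspace index j, the sub-SSR problem has the unique solution P_j x_true: that is, the set {x_j ∈ V^j : there exists Γ ⊆ {1,…,p} with |Γ| = p − s such that x_j agrees with sensor i for all i ∈ Γ} equals {P_j x_true}. Consequently, the unique plausible state x_true equals the sum over j of the unique sub-SSR solutions. (Lemma 4, claim 3.) -/
open Matrix

noncomputable section

/-! Two states explaining the same `p - s` sensors agree on at least `p - 2s` unattacked
sensors, so by `2s`-sparse observability they coincide. For a sub-SSR solution `x_j`, the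
differences between the substates witnessing agreement with an unattacked sensor and the
components `P_k x_true` lie in the `V^k` and sum to a state invisible to that sensor. The
projection onto `V^j` along the other generalized eigenspaces is a polynomial in `A`, and
the states invisible to a sensor form an `A`-invariant subspace, so `x_j - P_j x_true` is
invisible to every unattacked sensor of the witnessing set as well. -/

open Polynomial

section CayleyHamilton

variable {R : Type*} [CommRing R] {m ι : Type*} [Fintype m] [DecidableEq m]

theorem Matrix.aeval_X_sub_C_pow (A : Matrix m m R) (μ : R) (N : ℕ) :
    aeval A ((X - Polynomial.C μ) ^ N) = (A - μ • 1) ^ N := by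
  rw [map_pow, map_sub, aeval_X, aeval_C, Algebra.algebraMap_eq_smul_one]

/- By Cayley–Hamilton, `q(A) = (q mod χ_A)(A)` is a combination of the `A ^ τ` with
`τ < Fintype.card m`. -/
theorem Matrix.mul_aeval_mulVec_apply_eq_zero {A : Matrix m m R} {C : Matrix ι m R} {i : ι}
    {w : m → R} (h : ∀ τ < Fintype.card m, ((C * A ^ τ) *ᵥ w) i = 0) (q : R[X]) :
    ((C * aeval A q) *ᵥ w) i = 0 := by
  nontriviality R
  cases isEmpty_or_nonempty m
  · simp [mulVec, dotProduct]
  have hdeg : (q %ₘ A.charpoly).natDegree < Fintype.card m := by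
    by_cases h0 : q %ₘ A.charpoly = 0
    · simpa [h0] using Fintype.card_pos
    · rw [natDegree_lt_iff_degree_lt h0, ← A.charpoly_degree_eq_dim]
      exact degree_modByMonic_lt q A.charpoly_monic
  rw [aeval_eq_aeval_mod_charpoly, aeval_eq_sum_range' hdeg, Matrix.mul_sum, sum_mulVec,
    Finset.sum_apply]
  refine Finset.sum_eq_zero fun τ hτ => ?_
  rw [Matrix.mul_smul, smul_mulVec, Pi.smul_apply, h τ (Finset.mem_range.mp hτ), smul_zero]

end CayleyHamilton

section GeneralizedEigenspaces

variable {K : Type*} [Field K] {m ι κ : Type*} [Fintype m] [DecidableEq m] [Fintype ι]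
  [DecidableEq ι]

/- The polynomial `a * ∏_{k ≠ j} (X - λ_k)^N` from a Bézout identity
`a * ∏_{k ≠ j} (X - λ_k)^N + b * (X - λ_j)^N = 1` kills every `V^k`, `k ≠ j`, and is the
identity on `V^j`. -/
theorem Matrix.exists_aeval_mulVec_sum_eq_s12 (A : Matrix m m K) {lam : ι → K}
    (hlam : Function.Injective lam) (N : ℕ) (j : ι) :
    ∃ q : K[X], ∀ v : ι → m → K, (∀ k, ((A - lam k • 1) ^ N) *ᵥ v k = 0) →
      aeval A q *ᵥ ∑ k, v k = v j := by
  obtain ⟨a, b, hab⟩ : IsCoprime (∏ k ∈ Finset.univ.erase j, (X - Polynomial.C (lam k)) ^ N)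
      ((X - Polynomial.C (lam j)) ^ N) :=
    IsCoprime.prod_left fun k hk =>
      (pairwise_coprime_X_sub_C hlam (Finset.ne_of_mem_erase hk)).pow
  refine ⟨a * ∏ k ∈ Finset.univ.erase j, (X - Polynomial.C (lam k)) ^ N, fun v hv => ?_⟩
  have hkill : ∀ k ≠ j,
      aeval A (a * ∏ k ∈ Finset.univ.erase j, (X - Polynomial.C (lam k)) ^ N) *ᵥ v k = 0 := by
    intro k hk
    rw [← Finset.mul_prod_erase _ _ (Finset.mem_erase.mpr ⟨hk, Finset.mem_univ k⟩),
      ← mul_assoc, mul_right_comm, map_mul, ← mulVec_mulVec, aeval_X_sub_C_pow, hv k,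
      mulVec_zero]
  have hfix : aeval A (a * ∏ k ∈ Finset.univ.erase j, (X - Polynomial.C (lam k)) ^ N) *ᵥ v j
      = v j := by
    rw [eq_sub_of_add_eq hab, map_sub, map_one, sub_mulVec, one_mulVec, map_mul,
      ← mulVec_mulVec, aeval_X_sub_C_pow, hv j, mulVec_zero, sub_zero]
  rw [mulVec_sum, Finset.sum_eq_single j (fun k _ hk => hkill k hk) (by simp), hfix]

theorem Matrix.mul_pow_mulVec_component_apply_eq_zero {A : Matrix m m K} {lam : ι → K}
    (hlam : Function.Injective lam) {N : ℕ} {v : ι → m → K}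
    (hv : ∀ k, ((A - lam k • 1) ^ N) *ᵥ v k = 0) {C : Matrix κ m K} {i : κ}
    (h : ∀ τ < Fintype.card m, ((C * A ^ τ) *ᵥ ∑ k, v k) i = 0) (j : ι) (τ : ℕ) :
    ((C * A ^ τ) *ᵥ v j) i = 0 := by
  obtain ⟨q, hq⟩ := A.exists_aeval_mulVec_sum_eq_s12 hlam N j
  rw [← hq v hv, mulVec_mulVec, Matrix.mul_assoc,
    show A ^ τ * aeval A q = aeval A (X ^ τ * q) by rw [map_mul, map_pow, aeval_X]]
  exact mul_aeval_mulVec_apply_eq_zero h _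

end GeneralizedEigenspaces

theorem Finset.exists_card_eq_forall_notMem {α : Type*} [Fintype α] [DecidableEq α]
    {Λ : Finset α} {s : ℕ} (hΛ : Λ.card ≤ s) :
    ∃ Γ : Finset α, Γ.card = Fintype.card α - s ∧ ∀ i ∈ Γ, i ∉ Λ := by
  obtain ⟨Γ, hsub, hcard⟩ := Finset.exists_subset_card_eq
    (show Fintype.card α - s ≤ Λᶜ.card by rw [Finset.card_compl]; omega)
  exact ⟨Γ, hcard, fun i hi => Finset.mem_compl.mp (hsub hi)⟩

section SecureStateReconstruction

variable {n p r t : ℕ} {A : Matrix (Fin n) (Fin n) ℝ} {C : Matrix (Fin p) (Fin n) ℝ}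
  {lam : Fin r → ℝ} {P : Fin r → Matrix (Fin n) (Fin n) ℝ} {Y : Fin p → Fin (t + 1) → ℝ}

theorem mul_pow_mulVec_sub_apply_eq_zero_of_obsMap_eq (ht : n - 1 ≤ t) {i : Fin p}
    {x y : Fin n → ℝ} (h : obsMap t A C i x = obsMap t A C i y) :
    ∀ τ < n, ((C * A ^ τ) *ᵥ (x - y)) i = 0 := by
  intro τ hτ
  simpa [obsMap, mulVec_sub, sub_eq_zero] using congrFun h ⟨τ, by omega⟩

theorem eq_zero_of_forall_unattacked {s : ℕ}
    (hobs : ∀ Γ : Finset (Fin p), Γ.card = p - 2 * s →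
        ∀ x : Fin n → ℝ, (∀ i ∈ Γ, ∀ τ < n, ((C * A ^ τ).mulVec x) i = 0) → x = 0)
    {ΛA Γ : Finset (Fin p)} (hΛA : ΛA.card ≤ s) (hΓ : Γ.card = p - s) {x : Fin n → ℝ}
    (h : ∀ i ∈ Γ, i ∉ ΛA → ∀ τ < n, ((C * A ^ τ) *ᵥ x) i = 0) : x = 0 := by
  obtain ⟨Γ', hsub, hcard⟩ := Finset.exists_subset_card_eq
    (show p - 2 * s ≤ (Γ \ ΛA).card by have := Finset.le_card_sdiff ΛA Γ; omega)
  exact hobs Γ' hcard x fun i hi => h i (Finset.mem_sdiff.mp (hsub hi)).1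
    (Finset.mem_sdiff.mp (hsub hi)).2

theorem proj_add_sum_erase (hPsum : ∀ x : Fin n → ℝ, ∑ j, (P j).mulVec x = x) (j : Fin r)
    (x : Fin n → ℝ) : (P j) *ᵥ x + ∑ k ∈ Finset.univ.erase j, (P k) *ᵥ x = x :=
  (Finset.add_sum_erase _ _ (Finset.mem_univ j)).trans (hPsum x)

theorem agrees_proj (hPmem : ∀ j, ∀ x : Fin n → ℝ, (P j).mulVec x ∈ genEig A (lam j))
    (hPsum : ∀ x : Fin n → ℝ, ∑ j, (P j).mulVec x = x) {i : Fin p} {x : Fin n → ℝ}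
    (hY : Y i = obsMap t A C i x) (j : Fin r) : agrees t A C lam Y j ((P j) *ᵥ x) i :=
  ⟨fun k => (P k) *ᵥ x, fun k _ => hPmem k x, by rw [proj_add_sum_erase hPsum, hY]⟩

theorem mul_pow_mulVec_sub_proj_apply_eq_zero_of_agrees (hlam : Function.Injective lam)
    (ht : n - 1 ≤ t) (hPmem : ∀ j, ∀ x : Fin n → ℝ, (P j).mulVec x ∈ genEig A (lam j))
    (hPsum : ∀ x : Fin n → ℝ, ∑ j, (P j).mulVec x = x) {i : Fin p} {x : Fin n → ℝ}
    (hY : Y i = obsMap t A C i x) {j : Fin r} {xj : Fin n → ℝ} (hxj : xj ∈ genEig A (lam j))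
    (hagree : agrees t A C lam Y j xj i) :
    ∀ τ < n, ((C * A ^ τ) *ᵥ (xj - (P j) *ᵥ x)) i = 0 := by
  obtain ⟨z, hz, hzY⟩ := hagree
  set v : Fin r → Fin n → ℝ := fun k => (if k = j then xj else z k) - (P k) *ᵥ x with hvdef
  have hv : ∀ k, ((A - lam k • 1) ^ n) *ᵥ v k = 0 := by
    intro k
    rw [hvdef, mulVec_sub, show ((A - lam k • 1) ^ n) *ᵥ (P k *ᵥ x) = 0 from hPmem k x,
      sub_zero]
    split_ifs with hk
    · exact hk ▸ hxj
    · exact hz k hk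
  have hsum : ∑ k, v k = (xj + ∑ k ∈ Finset.univ.erase j, z k) - x := by
    rw [hvdef, Finset.sum_sub_distrib, hPsum x, ← Finset.add_sum_erase _ _ (Finset.mem_univ j),
      if_pos rfl, Finset.sum_congr rfl fun k hk => if_neg (Finset.ne_of_mem_erase hk)]
  have hunobs : ∀ τ < Fintype.card (Fin n), ((C * A ^ τ) *ᵥ ∑ k, v k) i = 0 := by
    simpa [hsum] using mul_pow_mulVec_sub_apply_eq_zero_of_obsMap_eq ht (hzY.trans hY)
  intro τ _
  simpa [hvdef] using mul_pow_mulVec_component_apply_eq_zero hlam hv hunobs j τ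

end SecureStateReconstruction

theorem sub_ssr_unique_solution_general
    {n p r s t : ℕ} (ht : n - 1 ≤ t)
    (A : Matrix (Fin n) (Fin n) ℝ) (C : Matrix (Fin p) (Fin n) ℝ)
    (lam : Fin r → ℝ) (hlam : Function.Injective lam)
    (P : Fin r → Matrix (Fin n) (Fin n) ℝ)
    (hPmem : ∀ j, ∀ x : Fin n → ℝ, (P j).mulVec x ∈ genEig A (lam j))
    (hPsum : ∀ x : Fin n → ℝ, ∑ j, (P j).mulVec x = x)
    (hobs : ∀ Γ : Finset (Fin p), Γ.card = p - 2 * s →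
        ∀ x : Fin n → ℝ, (∀ i ∈ Γ, ∀ τ < n, ((C * A ^ τ).mulVec x) i = 0) → x = 0)
    (Y : Fin p → Fin (t + 1) → ℝ) (xtrue : Fin n → ℝ)
    (ΛA : Finset (Fin p)) (hΛA : ΛA.card ≤ s)
    (hdata : ∀ i ∉ ΛA, Y i = obsMap t A C i xtrue) :
    (∀ j : Fin r,
      {xj : Fin n → ℝ | xj ∈ genEig A (lam j) ∧ ∃ Γ : Finset (Fin p),
          Γ.card = p - s ∧ ∀ i ∈ Γ, agrees t A C lam Y j xj i}
        = {(P j).mulVec xtrue}) ∧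
    {x : Fin n → ℝ | plausible t A C s Y x} = {xtrue} ∧
    xtrue = ∑ j, (P j).mulVec xtrue := by
  obtain ⟨Γ₀, hΓ₀, hhonest⟩ := Finset.exists_card_eq_forall_notMem hΛA
  rw [Fintype.card_fin] at hΓ₀
  refine ⟨fun j => ?_, ?_, (hPsum xtrue).symm⟩
  · ext xj
    refine ⟨fun ⟨hxj, Γ, hΓ, hagree⟩ => ?_, ?_⟩
    · exact sub_eq_zero.mp <| eq_zero_of_forall_unattacked hobs hΛA hΓ fun i hi hiA =>
        mul_pow_mulVec_sub_proj_apply_eq_zero_of_agrees hlam ht hPmem hPsum (hdata i hiA) hxj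
          (hagree i hi)
    · rintro rfl
      exact ⟨hPmem j xtrue, Γ₀, hΓ₀, fun i hi =>
        agrees_proj hPmem hPsum (hdata i (hhonest i hi)) j⟩
  · ext x
    refine ⟨fun ⟨Γ, hΓ, hx⟩ => ?_, ?_⟩
    · exact sub_eq_zero.mp <| eq_zero_of_forall_unattacked hobs hΛA hΓ fun i hi hiA =>
        mul_pow_mulVec_sub_apply_eq_zero_of_obsMap_eq ht ((hx i hi).trans (hdata i hiA))
    · rintro rfl
      exact ⟨Γ₀, hΓ₀, fun i hi => (hdata i (hhonest i hi)).symm⟩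

/-- Lemma 4, claim 3: under `2s`-sparse observability and data generated
by at most `s` attacks, each sub-SSR problem has the unique solution `P_j x_true`, and
the unique plausible state `x_true` is the sum of the sub-SSR solutions. -/
theorem sub_ssr_unique_solution
    {n p r s t : ℕ} (hsp : 2 * s ≤ p) (ht : n - 1 ≤ t)
    (A : Matrix (Fin n) (Fin n) ℝ) (C : Matrix (Fin p) (Fin n) ℝ)
    (lam : Fin r → ℝ) (hlam : Function.Injective lam)
    (heig : ∀ j, ∃ w : Fin n → ℝ, w ≠ 0 ∧ A.mulVec w = lam j • w)
    (P : Fin r → Matrix (Fin n) (Fin n) ℝ)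
    (hPmem : ∀ j, ∀ x : Fin n → ℝ, (P j).mulVec x ∈ genEig A (lam j))
    (hPsum : ∀ x : Fin n → ℝ, ∑ j, (P j).mulVec x = x)
    (hobs : ∀ Γ : Finset (Fin p), Γ.card = p - 2 * s →
        ∀ x : Fin n → ℝ, (∀ i ∈ Γ, ∀ τ < n, ((C * A ^ τ).mulVec x) i = 0) → x = 0)
    (Y : Fin p → Fin (t + 1) → ℝ) (xtrue : Fin n → ℝ)
    (ΛA : Finset (Fin p)) (hΛA : ΛA.card ≤ s)
    (hdata : ∀ i ∉ ΛA, Y i = obsMap t A C i xtrue) :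
    (∀ j : Fin r,
      {xj : Fin n → ℝ | xj ∈ genEig A (lam j) ∧ ∃ Γ : Finset (Fin p),
          Γ.card = p - s ∧ ∀ i ∈ Γ, agrees t A C lam Y j xj i}
        = {(P j).mulVec xtrue}) ∧
    {x : Fin n → ℝ | plausible t A C s Y x} = {xtrue} ∧
    xtrue = ∑ j, (P j).mulVec xtrue :=
  sub_ssr_unique_solution_general ht A C lam hlam P hPmem hPsum hobs Y xtrue ΛA hΛA hdata
end
end

section
/- Let H ∈ ℝ^{l×n}, g ∈ ℝ^l, let 𝒞 = {x ∈ ℝ^n : Hx + g ≥ 0 componentwise}, and let γ ∈ (0,1]. Let x : ℕ → ℝ^n be a sequence and T ∈ ℕ be such that for all τ ≥ T, H x(τ+1) + g ≥ (1−γ)(H x(τ) + g) componentwise. Then: (i) for all τ ≥ T and every component k ∈ {1,…,l}, (H x(τ) + g)_k ≥ (1−γ)^{τ−T} (H x(T) + g)_k; (ii) if x(T) ∈ 𝒞 then x(τ) ∈ 𝒞 for all τ ≥ T; (iii) for every component k, min{(H x(τ) + g)_k, 0} → 0 as τ → ∞. (Theorem 1: forward invariance and asymptotic attraction of the polytopic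 safe set under the discrete-time CBF condition.) -/
/-!
Along each row the slack `u τ = (H x(τ) + g)_k` satisfies `u (τ+1) ≥ (1-γ) u τ`, so by induction
it stays above the geometric sequence `(1-γ)^(τ-T) u T`. This lower bound is nonnegative when
`u T` is, and its negative part `(1-γ)^(τ-T) min (u T) 0` tends to `0` because `0 ≤ 1-γ < 1`.
-/

open Matrix Filter Topology

section GeometricLowerBound

variable {u : ℕ → ℝ} {c : ℝ} {T : ℕ}

theorem pow_sub_mul_le_of_mul_le_succ (hc : 0 ≤ c) (hstep : ∀ τ ≥ T, c * u τ ≤ u (τ + 1)) :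
    ∀ τ ≥ T, c ^ (τ - T) * u T ≤ u τ := by
  intro τ hτ
  induction τ, hτ using Nat.le_induction with
  | base => simp
  | succ m hm ih =>
    calc c ^ (m + 1 - T) * u T = c * (c ^ (m - T) * u T) := by
          rw [Nat.sub_add_comm hm, pow_succ]; ring
      _ ≤ c * u m := mul_le_mul_of_nonneg_left ih hc
      _ ≤ u (m + 1) := hstep m hm

theorem nonneg_of_mul_le_succ (hc : 0 ≤ c) (hstep : ∀ τ ≥ T, c * u τ ≤ u (τ + 1))
    (h0 : 0 ≤ u T) : ∀ τ ≥ T, 0 ≤ u τ := fun τ hτ =>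
  (mul_nonneg (pow_nonneg hc _) h0).trans (pow_sub_mul_le_of_mul_le_succ hc hstep τ hτ)

theorem tendsto_min_zero_of_mul_le_succ (hc0 : 0 ≤ c) (hc1 : c < 1)
    (hstep : ∀ τ ≥ T, c * u τ ≤ u (τ + 1)) :
    Tendsto (fun τ => min (u τ) 0) atTop (𝓝 0) := by
  have hpow : Tendsto (fun τ => c ^ (τ - T) * min (u T) 0) atTop (𝓝 0) := by
    simpa using ((tendsto_pow_atTop_nhds_zero_of_lt_one hc0 hc1).comp
      (tendsto_sub_atTop_nat T)).mul_const (min (u T) 0)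
  refine tendsto_of_tendsto_of_tendsto_of_le_of_le' hpow tendsto_const_nhds ?_
    (Eventually.of_forall fun τ => min_le_right _ _)
  filter_upwards [eventually_ge_atTop T] with τ hτ
  calc c ^ (τ - T) * min (u T) 0 = min (c ^ (τ - T) * u T) 0 := by
        rw [mul_min_of_nonneg _ _ (pow_nonneg hc0 _), mul_zero]
    _ ≤ min (u τ) 0 := min_le_min_right 0 (pow_sub_mul_le_of_mul_le_succ hc0 hstep τ hτ)

end GeometricLowerBound

/-- Theorem 1: forward invariance and asymptotic attraction of the
polytopic safe set `{x | Hx + g ≥ 0}` along any sequence satisfying the discrete-time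
CBF condition with parameter `γ ∈ (0,1]` from time `T` on. -/
theorem cbf_safety_and_attraction
    {n l : ℕ} (H : Matrix (Fin l) (Fin n) ℝ) (g : Fin l → ℝ)
    (γ : ℝ) (hγ0 : 0 < γ) (hγ1 : γ ≤ 1)
    (x : ℕ → Fin n → ℝ) (T : ℕ)
    (hcbf : ∀ τ ≥ T, ∀ k : Fin l,
      H.mulVec (x (τ + 1)) k + g k ≥ (1 - γ) * (H.mulVec (x τ) k + g k)) :
    (∀ τ ≥ T, ∀ k : Fin l,
      H.mulVec (x τ) k + g k ≥ (1 - γ) ^ (τ - T) * (H.mulVec (x T) k + g k)) ∧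
    ((∀ k : Fin l, H.mulVec (x T) k + g k ≥ 0) →
      ∀ τ ≥ T, ∀ k : Fin l, H.mulVec (x τ) k + g k ≥ 0) ∧
    (∀ k : Fin l, Filter.Tendsto (fun τ : ℕ => min (H.mulVec (x τ) k + g k) 0)
      Filter.atTop (nhds 0)) := by
  have hc0 : 0 ≤ 1 - γ := by linarith
  have hc1 : 1 - γ < 1 := by linarith
  have hstep (k : Fin l) := fun τ hτ => hcbf τ hτ k
  refine ⟨fun τ hτ k => ?_, fun h0 τ hτ k => ?_, fun k => ?_⟩
  · exact pow_sub_mul_le_of_mul_le_succ hc0 (hstep k) τ hτ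
  · exact nonneg_of_mul_le_succ hc0 (hstep k) (h0 k) τ hτ
  · exact tendsto_min_zero_of_mul_le_succ hc0 hc1 (hstep k)
end
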